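/- arXiv:2307.00232 — 8 statements merged into one kernel-verified Lean document; each statement's English description precedes it below -/
import Mathlib

section
/- Let Z ⊆ ℝ^d be a closed set, let W = ℝ^d \ Z, and let f : W → ℂ be smooth. Suppose that f and all its iterated partial derivatives vanish at the boundary of W, i.e. for every multi-index α ∈ ℕ^d and every point z in the frontier of W, ∂^α f(x) → 0 as x → z with x ∈ W. Then the function g : ℝ^d → ℂ equal to f on W and to 0 on Z is smooth on ℝ^d and vanishes to infinite order on Z. -/
set_option maxHeartbeats 1000000

open Set Filter Topology

/-- Key analytic lemma: a function vanishing outside an open set `W`, differentiable on `W`,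
whose values and derivatives tend to `0` at all frontier points of `W`, is differentiable
everywhere, with derivative equal to the indicator of its derivative on `W`. -/
lemma keyA {E F : Type*} [NormedAddCommGroup E] [NormedSpace ℝ E]
    [NormedAddCommGroup F] [NormedSpace ℝ F]
    {W : Set E} (hW : IsOpen W) {h : E → F}
    (h0 : ∀ x ∉ W, h x = 0)
    (hd : DifferentiableOn ℝ h W)
    (hb0 : ∀ z ∈ frontier W, Tendsto h (𝓝[W] z) (𝓝 0))
    (hb1 : ∀ z ∈ frontier W, Tendsto (fun w => fderiv ℝ h w) (𝓝[W] z) (𝓝 0)) :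
    ∀ x, HasFDerivAt h (W.indicator (fun w => fderiv ℝ h w) x) x := by
  intro x
  by_cases hx : x ∈ W
  · rw [Set.indicator_of_mem hx]
    exact (hd.differentiableAt (hW.mem_nhds hx)).hasFDerivAt
  rw [Set.indicator_of_notMem hx]
  by_cases hx2 : x ∈ closure W
  swap
  · -- `x` is in the interior of the complement; `h` vanishes near `x`.
    have hev : ∀ᶠ y in 𝓝 x, h y = 0 := by
      have hmem : (closure W)ᶜ ∈ 𝓝 x := isClosed_closure.isOpen_compl.mem_nhds hx2
      filter_upwards [hmem] with y hy
      exact h0 y fun hyW => hy (subset_closure hyW)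
    have : HasFDerivAt (fun _ : E => (0 : F)) (0 : E →L[ℝ] F) x := hasFDerivAt_const 0 x
    apply this.congr_of_eventuallyEq
    filter_upwards [hev] with y hy using hy
  -- frontier case
  have hxf : x ∈ frontier W := by
    rw [hW.frontier_eq]; exact ⟨hx2, hx⟩
  rw [hasFDerivAt_iff_isLittleO_nhds_zero]
  rw [Asymptotics.isLittleO_iff]
  intro c hc
  obtain ⟨δ, hδ, hδc⟩ := Metric.tendsto_nhdsWithin_nhds.1 (hb1 x hxf) c hc
  have key : ∀ y : E, dist y x < δ → ‖h y‖ ≤ c * ‖y - x‖ := by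
    intro y hy
    by_cases hyW : y ∈ W
    swap
    · rw [h0 y hyW, norm_zero]; positivity
    set γ : ℝ → E := fun t => y + t • (x - y) with hγ
    have hγ0 : γ 0 = y := by simp [hγ]
    have hγ1 : γ 1 = x := by simp [hγ]
    have hγcont : Continuous γ := by fun_prop
    have hγdist : ∀ t ∈ Icc (0:ℝ) 1, dist (γ t) x < δ := by
      intro t ht
      have heq : γ t - x = (1 - t) • (y - x) := by
        simp only [hγ]; module
      rw [dist_eq_norm, heq, norm_smul]
      calc ‖(1 - t : ℝ)‖ * ‖y - x‖ ≤ 1 * ‖y - x‖ := by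
            apply mul_le_mul_of_nonneg_right _ (norm_nonneg _)
            rw [Real.norm_eq_abs, abs_le]
            constructor <;> linarith [ht.1, ht.2]
        _ = ‖y - x‖ := one_mul _
        _ < δ := by rwa [← dist_eq_norm]
    set T : Set ℝ := Icc (0:ℝ) 1 ∩ γ ⁻¹' Wᶜ with hT
    have hTc : IsClosed T := isClosed_Icc.inter (hW.isClosed_compl.preimage hγcont)
    have hT1 : (1:ℝ) ∈ T := ⟨by norm_num, by simp [hγ1, hx]⟩
    have hTne : T.Nonempty := ⟨1, hT1⟩
    have hTbdd : BddBelow T := ⟨0, fun t ht => ht.1.1⟩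
    set t₀ := sInf T with ht₀
    have ht₀T : t₀ ∈ T := hTc.csInf_mem hTne hTbdd
    have ht₀mem : t₀ ∈ Icc (0:ℝ) 1 := ht₀T.1
    have ht₀W : γ t₀ ∉ W := ht₀T.2
    have hbefore : ∀ t ∈ Ico 0 t₀, γ t ∈ W := by
      intro t ht
      by_contra hc'
      have : t ∈ T := ⟨⟨ht.1, ht.2.le.trans ht₀mem.2⟩, hc'⟩
      exact absurd (csInf_le hTbdd this) (not_le.2 ht.2)
    have ht₀pos : 0 < t₀ := by
      rcases lt_or_eq_of_le ht₀mem.1 with hlt | heq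
      · exact hlt
      · exfalso; apply ht₀W; rw [← heq, hγ0]; exact hyW
    have hz' : γ t₀ ∈ frontier W := by
      rw [hW.frontier_eq]
      refine ⟨?_, ht₀W⟩
      have htend : Tendsto γ (𝓝[<] t₀) (𝓝 (γ t₀)) :=
        hγcont.continuousAt.tendsto.mono_left nhdsWithin_le_nhds
      apply mem_closure_of_tendsto htend
      filter_upwards [Ioo_mem_nhdsLT_of_mem (⟨ht₀pos, le_refl t₀⟩ : t₀ ∈ Ioc 0 t₀)]
        with t ht
      exact hbefore t ⟨ht.1.le, ht.2⟩
    set φ : ℝ → F := fun t => h (γ t) with hφ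
    have hφt₀ : φ t₀ = 0 := h0 _ ht₀W
    have hct₀ : ContinuousWithinAt φ (Icc 0 t₀) t₀ := by
      rw [ContinuousWithinAt, hφt₀]
      have hsub : Icc (0:ℝ) t₀ ⊆ Ico 0 t₀ ∪ {t₀} := by
        intro s hs
        rcases lt_or_eq_of_le hs.2 with h' | h'
        · exact Or.inl ⟨hs.1, h'⟩
        · exact Or.inr (by simp [h'])
      apply Tendsto.mono_left _ ((nhdsWithin_mono t₀ hsub).trans_eq (nhdsWithin_union _ _ _))
      apply Tendsto.sup
      · have h1 : Tendsto γ (𝓝[Ico 0 t₀] t₀) (𝓝[W] (γ t₀)) := by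
          apply tendsto_nhdsWithin_of_tendsto_nhds_of_eventually_within
          · exact hγcont.continuousAt.tendsto.mono_left nhdsWithin_le_nhds
          · exact eventually_nhdsWithin_of_forall fun s hs => hbefore s hs
        exact (hb0 _ hz').comp h1
      · rw [nhdsWithin_singleton]
        refine tendsto_pure_left.2 fun s hs => ?_
        rw [hφt₀]
        exact mem_of_mem_nhds hs
    have hφcont : ContinuousOn φ (Icc 0 t₀) := by
      intro t ht
      rcases lt_or_eq_of_le ht.2 with htlt | hteq
      · have hγt : γ t ∈ W := hbefore t ⟨ht.1, htlt⟩
        exact ((hd.differentiableAt (hW.mem_nhds hγt)).continuousAt.comp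
          hγcont.continuousAt).continuousWithinAt
      · exact hteq ▸ hct₀
    have hφderiv : ∀ t ∈ Ico 0 t₀,
        HasDerivWithinAt φ ((fderiv ℝ h (γ t)) (x - y)) (Ici t) t := by
      intro t ht
      have hγt : γ t ∈ W := hbefore t ht
      have hγd : HasDerivAt γ (x - y) t := by
        have h1 : HasDerivAt (fun s : ℝ => s • (x - y)) (x - y) t := by
          simpa using (hasDerivAt_id t).smul_const (x - y)
        simpa [hγ] using h1.const_add y
      exact ((hd.differentiableAt (hW.mem_nhds hγt)).hasFDerivAt.comp_hasDerivAt t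
        hγd).hasDerivWithinAt
    have hbound : ∀ t ∈ Ico 0 t₀, ‖(fderiv ℝ h (γ t)) (x - y)‖ ≤ c * ‖y - x‖ := by
      intro t ht
      have hγt : γ t ∈ W := hbefore t ht
      have hd' : ‖fderiv ℝ h (γ t)‖ < c := by
        have := hδc hγt (hγdist t ⟨ht.1, ht.2.le.trans ht₀mem.2⟩)
        simpa [dist_zero_right] using this
      calc ‖(fderiv ℝ h (γ t)) (x - y)‖ ≤ ‖fderiv ℝ h (γ t)‖ * ‖x - y‖ :=
            ContinuousLinearMap.le_opNorm _ _
        _ ≤ c * ‖x - y‖ := mul_le_mul_of_nonneg_right hd'.le (norm_nonneg _)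
        _ = c * ‖y - x‖ := by rw [norm_sub_rev]
    have hmvt := norm_image_sub_le_of_norm_deriv_right_le_segment hφcont hφderiv hbound t₀
      ⟨ht₀mem.1, le_refl _⟩
    have hφ0 : φ 0 = h y := by simp only [hφ]; rw [hγ0]
    rw [hφt₀, hφ0] at hmvt
    have hcnn : 0 ≤ c * ‖y - x‖ := by positivity
    calc ‖h y‖ = ‖(0 : F) - h y‖ := by rw [zero_sub, norm_neg]
      _ ≤ c * ‖y - x‖ * (t₀ - 0) := hmvt
      _ ≤ c * ‖y - x‖ * 1 := by
          apply mul_le_mul_of_nonneg_left _ hcnn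
          linarith [ht₀mem.2]
      _ = c * ‖y - x‖ := mul_one _
  filter_upwards [Metric.ball_mem_nhds (0 : E) hδ] with v hv
  have hdist : dist (x + v) x < δ := by
    rw [dist_eq_norm]
    simpa using mem_ball_zero_iff.1 hv
  have := key (x + v) hdist
  simpa [h0 x hx] using this

/-- A smooth function on `W = ℝ^d \ Z` all of whose iterated derivatives
vanish at the boundary of `W` extends by zero to a smooth function on `ℝ^d`
vanishing to infinite order on `Z`. -/
theorem stmt2 (d : ℕ) (Z : Set (Fin d → ℝ)) (hZ : IsClosed Z)
    (f : (Fin d → ℝ) → ℂ) (hf : ContDiffOn ℝ (⊤ : ℕ∞) f Zᶜ)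
    (hbd : ∀ (n : ℕ), ∀ z ∈ frontier (Zᶜ),
      Filter.Tendsto (fun x => iteratedFDerivWithin ℝ n f Zᶜ x)
        (nhdsWithin z Zᶜ) (nhds 0)) :
    ContDiff ℝ (⊤ : ℕ∞) (Set.indicator Zᶜ f) ∧
    ∀ (n : ℕ), ∀ x ∈ Z, iteratedFDeriv ℝ n (Set.indicator Zᶜ f) x = 0 := by
  have hW : IsOpen Zᶜ := hZ.isOpen_compl
  set G : (n : ℕ) → (Fin d → ℝ) → ((Fin d → ℝ) [×n]→L[ℝ] ℂ) :=
    fun n => Set.indicator Zᶜ (iteratedFDerivWithin ℝ n f Zᶜ) with hG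
  set e : (n : ℕ) → ((Fin d → ℝ) [×(n+1)]→L[ℝ] ℂ) ≃ₗᵢ[ℝ]
      ((Fin d → ℝ) →L[ℝ] (Fin d → ℝ) [×n]→L[ℝ] ℂ) :=
    fun n => continuousMultilinearCurryLeftEquiv ℝ (fun _ : Fin (n+1) => (Fin d → ℝ)) ℂ with he
  have hGmem : ∀ n, ∀ x ∈ Zᶜ, G n x = iteratedFDerivWithin ℝ n f Zᶜ x :=
    fun n x hx => Set.indicator_of_mem hx _
  have hGnot : ∀ n, ∀ x ∉ Zᶜ, G n x = 0 :=
    fun n x hx => Set.indicator_of_notMem hx _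
  have hGdiff : ∀ n, DifferentiableOn ℝ (G n) Zᶜ := by
    intro n
    apply (hf.differentiableOn_iteratedFDerivWithin ?_ hW.uniqueDiffOn).congr
    · intro x hx; exact Set.indicator_of_mem hx _
    · exact_mod_cast WithTop.coe_lt_coe.2 (ENat.coe_lt_top n)
  have hGb : ∀ n, ∀ z ∈ frontier Zᶜ, Tendsto (G n) (𝓝[Zᶜ] z) (𝓝 0) := by
    intro n z hz
    apply (hbd n z hz).congr'
    filter_upwards [self_mem_nhdsWithin] with w hw
    exact (Set.indicator_of_mem hw _).symm
  have hfd : ∀ n, ∀ w ∈ Zᶜ, fderiv ℝ (G n) w =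
      e n (iteratedFDerivWithin ℝ (n+1) f Zᶜ w) := by
    intro n w hw
    have h1 : G n =ᶠ[𝓝 w] iteratedFDerivWithin ℝ n f Zᶜ := by
      filter_upwards [hW.mem_nhds hw] with v hv
      exact Set.indicator_of_mem hv _
    rw [h1.fderiv_eq, ← fderivWithin_of_isOpen hW hw, fderivWithin_iteratedFDerivWithin]
    rfl
  have hkey : ∀ n x, HasFDerivAt (G n) (e n (G (n+1) x)) x := by
    intro n x
    have hb1 : ∀ z ∈ frontier Zᶜ, Tendsto (fun w => fderiv ℝ (G n) w) (𝓝[Zᶜ] z) (𝓝 0) := by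
      intro z hz
      have h2 : Tendsto (fun w => e n (iteratedFDerivWithin ℝ (n+1) f Zᶜ w))
          (𝓝[Zᶜ] z) (𝓝 0) := by
        have h3 := ((e n).continuous.tendsto 0).comp (hbd (n+1) z hz)
        rw [(e n).map_zero] at h3
        exact h3
      apply h2.congr'
      filter_upwards [self_mem_nhdsWithin] with w hw
      exact (hfd n w hw).symm
    have H : HasFDerivAt (G n) (Zᶜ.indicator (fun w => fderiv ℝ (G n) w) x) x :=
      keyA hW (hGnot n) (hGdiff n) (hGb n) hb1 x
    have heq : Zᶜ.indicator (fun w => fderiv ℝ (G n) w) x = e n (G (n+1) x) := by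
      by_cases hx : x ∈ Zᶜ
      · rw [Set.indicator_of_mem hx, hfd n x hx, hGmem (n+1) x hx]
      · rw [Set.indicator_of_notMem hx, hGnot (n+1) x hx, (e n).map_zero]
    rwa [heq] at H
  have hfderivG : ∀ n, fderiv ℝ (G n) = fun x => e n (G (n+1) x) :=
    fun n => funext fun x => (hkey n x).fderiv
  have hcd : ∀ m : ℕ, ∀ n, ContDiff ℝ (m : ℕ) (G n) := by
    intro m
    induction m with
    | zero =>
      intro n
      simp only [Nat.cast_zero, contDiff_zero]
      have : Differentiable ℝ (G n) := fun x => (hkey n x).differentiableAt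
      exact this.continuous
    | succ m ih =>
      intro n
      simp only [Nat.cast_add, Nat.cast_one]
      rw [contDiff_succ_iff_fderiv]
      refine ⟨fun x => (hkey n x).differentiableAt, ?_, ?_⟩
      · intro hcontra
        exact absurd hcontra (by simp)
      · rw [hfderivG n]
        have h1 : ContDiff ℝ ((m:ℕ) : WithTop ℕ∞) (e n) := by apply LinearIsometryEquiv.contDiff
        exact h1.comp (ih (n+1))
  have hcdtop : ContDiff ℝ (⊤ : ℕ∞) (G 0) :=
    contDiff_infty.2 fun m => hcd m 0
  have hgrepr : Set.indicator Zᶜ f =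
      fun x => continuousMultilinearCurryFin0 ℝ (Fin d → ℝ) ℂ (G 0 x) := by
    funext x
    by_cases hx : x ∈ Zᶜ
    · rw [Set.indicator_of_mem hx, hGmem 0 x hx]
      simp
    · rw [Set.indicator_of_notMem hx, hGnot 0 x hx, (continuousMultilinearCurryFin0 ℝ (Fin d → ℝ) ℂ).map_zero]
  constructor
  · rw [hgrepr]
    exact (continuousMultilinearCurryFin0 ℝ (Fin d → ℝ) ℂ).contDiff.comp hcdtop
  · have hiter : ∀ n, iteratedFDeriv ℝ n (Set.indicator Zᶜ f) = G n := by
      intro n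
      induction n with
      | zero =>
        funext x
        by_cases hx : x ∈ Zᶜ
        · rw [hGmem 0 x hx]
          ext m
          simp [Set.indicator_of_mem hx]
        · rw [hGnot 0 x hx]
          ext m
          simp [Set.indicator_of_notMem hx]
      | succ n ih =>
        funext x
        rw [iteratedFDeriv_succ_eq_comp_left]
        simp only [Function.comp_apply]
        rw [ih, hfderivG n]
        exact (e n).symm_apply_apply (G (n+1) x)
    intro n x hx
    rw [hiter n]
    exact Set.indicator_of_notMem (by simpa using hx) _
end

section
/- Let Z ⊆ ℝ^d be a nonempty closed set, W = ℝ^d \ Z, and let δ(x) denote the distance from x to Z. Let Δ : W → ℝ be a smooth function such that there exist constants c_2 > c_1 > 0 with c_1 δ(x) ≤ Δ(x) ≤ c_2 δ(x) for all x ∈ W, and such that for every k ∈ ℕ there is a constant B_k ≥ 0 with ‖D^k Δ(x)‖ ≤ B_k δ(x)^{1−k} for all x ∈ W (D^k denotes the k-th iterated Fréchet derivative). Let g : (0,∞) → ℝ be a smooth function all of whose derivatives vanish at 0, i.e. for every j ∈ ℕ, g^{(j)}(t) → 0 as t → 0⁺. Then the function ρ : ℝ^d → ℝ equal to g ∘ Δ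 on W and to 0 on Z is smooth on ℝ^d and vanishes to infinite order on Z. -/
open Set Filter Metric Asymptotics
open scoped Topology

private lemma coelt (m : ℕ) : ((m : ℕ∞) : WithTop ℕ∞) < ((⊤ : ℕ∞) : WithTop ℕ∞) :=
  WithTop.coe_lt_coe.mpr (lt_top_iff_ne_top.2 (by simp))

/-- All iterated derivatives of `g` on `(0,∞)` are `o(t^m)` at `0⁺`, for every `m`. -/
private lemma gflat (g : ℝ → ℝ) (hgsm : ContDiffOn ℝ (⊤ : ℕ∞) g (Set.Ioi 0))
    (hgd : ∀ j : ℕ, Filter.Tendsto (fun t => iteratedDerivWithin j g (Set.Ioi 0) t)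
      (nhdsWithin 0 (Set.Ioi 0)) (nhds 0)) :
    ∀ m j : ℕ, Filter.Tendsto (fun t => iteratedDerivWithin j g (Set.Ioi 0) t / t ^ m)
      (𝓝[>] (0:ℝ)) (𝓝 0) := by
  intro m
  induction m with
  | zero => intro j; simpa using hgd j
  | succ m ih =>
    intro j
    have hG : ∀ x ∈ Set.Ioo (0:ℝ) 1, HasDerivAt (iteratedDerivWithin j g (Set.Ioi 0))
        (iteratedDerivWithin (j+1) g (Set.Ioi 0) x) x := by
      intro x hx
      have hxI : x ∈ Set.Ioi (0:ℝ) := hx.1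
      have hnhds : Set.Ioi (0:ℝ) ∈ 𝓝 x := isOpen_Ioi.mem_nhds hxI
      have hdiff : DifferentiableWithinAt ℝ (iteratedDerivWithin j g (Set.Ioi 0))
          (Set.Ioi 0) x :=
        (hgsm.differentiableOn_iteratedDerivWithin (coelt j) (uniqueDiffOn_Ioi 0)) x hxI
      have hda := hdiff.differentiableAt hnhds
      have hder : deriv (iteratedDerivWithin j g (Set.Ioi 0)) x
          = iteratedDerivWithin (j+1) g (Set.Ioi 0) x := by
        rw [iteratedDerivWithin_succ,
          derivWithin_of_isOpen isOpen_Ioi hxI]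
      rw [← hder]
      exact hda.hasDerivAt
    have hP : ∀ x ∈ Set.Ioo (0:ℝ) 1, HasDerivAt (fun t : ℝ => t ^ (m+1))
        ((((m+1 : ℕ) : ℝ)) * x ^ m) x := by
      intro x _
      simpa using hasDerivAt_pow (m+1) x
    have hg' : ∀ x ∈ Set.Ioo (0:ℝ) 1, (((m+1 : ℕ) : ℝ)) * x ^ m ≠ 0 := by
      intro x hx
      exact mul_ne_zero (Nat.cast_ne_zero.2 (Nat.succ_ne_zero m))
        (pow_ne_zero _ (ne_of_gt hx.1))
    have hga : Filter.Tendsto (fun t : ℝ => t ^ (m+1)) (𝓝[>] (0:ℝ)) (𝓝 0) := by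
      have := tendsto_nhdsWithin_of_tendsto_nhds (s := Set.Ioi (0:ℝ)) ((continuous_pow (m+1)).tendsto (0:ℝ))
      simpa [zero_pow (Nat.succ_ne_zero m)] using this
    have hdiv : Filter.Tendsto
        (fun x => iteratedDerivWithin (j+1) g (Set.Ioi 0) x / ((((m+1 : ℕ) : ℝ)) * x ^ m))
        (𝓝[>] (0:ℝ)) (𝓝 0) := by
      have h0 := (ih (j+1)).div_const (((m+1 : ℕ) : ℝ))
      rw [zero_div] at h0
      refine h0.congr (fun x => ?_)
      rw [div_mul_eq_div_div_swap]
    exact HasDerivAt.lhopital_zero_right_on_Ioo one_pos hG hP hg' (hgd j) hga hdiv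

/-- ε-δ form of `gflat`, uniform in `j ≤ n`. -/
private lemma gsmall (g : ℝ → ℝ) (hgsm : ContDiffOn ℝ (⊤ : ℕ∞) g (Set.Ioi 0))
    (hgd : ∀ j : ℕ, Filter.Tendsto (fun t => iteratedDerivWithin j g (Set.Ioi 0) t)
      (nhdsWithin 0 (Set.Ioi 0)) (nhds 0)) :
    ∀ (n m : ℕ) (ε : ℝ), 0 < ε → ∃ r > 0, ∀ j ≤ n, ∀ t : ℝ, 0 < t → t < r →
      |iteratedDerivWithin j g (Set.Ioi 0) t| ≤ ε * t ^ m := by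
  have single : ∀ (j m : ℕ) (ε : ℝ), 0 < ε → ∃ r > 0, ∀ t : ℝ, 0 < t → t < r →
      |iteratedDerivWithin j g (Set.Ioi 0) t| ≤ ε * t ^ m := by
    intro j m ε hε
    have h := gflat g hgsm hgd m j
    rw [Metric.tendsto_nhdsWithin_nhds] at h
    obtain ⟨r, hr, hball⟩ := h ε hε
    refine ⟨r, hr, fun t ht htr => ?_⟩
    have h1 : dist (iteratedDerivWithin j g (Set.Ioi 0) t / t ^ m) 0 < ε :=
      hball ht (by simpa [Real.dist_eq, abs_of_pos ht] using htr)
    rw [dist_zero_right, Real.norm_eq_abs] at h1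
    have htm : (0:ℝ) < t ^ m := pow_pos ht m
    have : |iteratedDerivWithin j g (Set.Ioi 0) t|
        = |iteratedDerivWithin j g (Set.Ioi 0) t / t ^ m| * t ^ m := by
      rw [abs_div, abs_of_pos htm, div_mul_cancel₀ _ (ne_of_gt htm)]
    rw [this]
    exact mul_le_mul_of_nonneg_right (le_of_lt h1) (le_of_lt htm)
  intro n
  induction n with
  | zero =>
    intro m ε hε
    obtain ⟨r, hr, h⟩ := single 0 m ε hε
    exact ⟨r, hr, fun j hj t ht htr => by rw [Nat.le_zero.1 hj]; exact h t ht htr⟩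
  | succ n ih =>
    intro m ε hε
    obtain ⟨r₁, hr₁, h₁⟩ := ih m ε hε
    obtain ⟨r₂, hr₂, h₂⟩ := single (n+1) m ε hε
    refine ⟨min r₁ r₂, lt_min hr₁ hr₂, fun j hj t ht htr => ?_⟩
    rcases Nat.lt_succ_iff_lt_or_eq.1 (Nat.lt_succ_of_le hj) with h | h
    · exact h₁ j (Nat.lt_succ_iff.1 h) t ht (lt_of_lt_of_le htr (min_le_left _ _))
    · rw [h]; exact h₂ t ht (lt_of_lt_of_le htr (min_le_right _ _))

/-- Composing a regularized distance function `Δ` for `Z` with a function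
`g` on `(0,∞)` all of whose derivatives vanish at `0⁺` yields (after extension by zero)
a smooth function on `ℝ^d` vanishing to infinite order on `Z`. -/
theorem stmt4 (d : ℕ) (Z : Set (Fin d → ℝ)) (hZ : IsClosed Z) (hZne : Z.Nonempty)
    (Δ : (Fin d → ℝ) → ℝ) (hΔ : ContDiffOn ℝ (⊤ : ℕ∞) Δ Zᶜ)
    (c₁ c₂ : ℝ) (hc₁ : 0 < c₁) (hc : c₁ < c₂)
    (hbound : ∀ x ∈ Zᶜ, c₁ * Metric.infDist x Z ≤ Δ x ∧ Δ x ≤ c₂ * Metric.infDist x Z)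
    (hderiv : ∀ k : ℕ, ∃ B : ℝ, 0 ≤ B ∧ ∀ x ∈ Zᶜ,
      ‖iteratedFDerivWithin ℝ k Δ Zᶜ x‖ ≤ B * Metric.infDist x Z ^ ((1 : ℤ) - k))
    (g : ℝ → ℝ) (hgsm : ContDiffOn ℝ (⊤ : ℕ∞) g (Set.Ioi 0))
    (hgd : ∀ j : ℕ, Filter.Tendsto (fun t => iteratedDerivWithin j g (Set.Ioi 0) t)
      (nhdsWithin 0 (Set.Ioi 0)) (nhds 0)) :
    ContDiff ℝ (⊤ : ℕ∞) (Set.indicator Zᶜ (fun x => g (Δ x))) ∧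
    ∀ (n : ℕ), ∀ x ∈ Z,
      iteratedFDeriv ℝ n (Set.indicator Zᶜ (fun x => g (Δ x))) x = 0 := by
  have hc₂ : 0 < c₂ := lt_trans hc₁ hc
  have hWo : IsOpen (Zᶜ : Set (Fin d → ℝ)) := hZ.isOpen_compl
  have hWu : UniqueDiffOn ℝ (Zᶜ : Set (Fin d → ℝ)) := hWo.uniqueDiffOn
  have hδpos : ∀ x ∈ (Zᶜ : Set (Fin d → ℝ)), 0 < Metric.infDist x Z := fun x hx =>
    (hZ.notMem_iff_infDist_pos hZne).1 hx
  have hmaps : Set.MapsTo Δ (Zᶜ : Set (Fin d → ℝ)) (Set.Ioi 0) := fun x hx =>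
    lt_of_lt_of_le (mul_pos hc₁ (hδpos x hx)) (hbound x hx).1
  have hf : ContDiffOn ℝ (⊤ : ℕ∞) (fun x => g (Δ x)) Zᶜ := hgsm.comp hΔ hmaps
  -- uniform bounds on the derivatives of Δ
  have maxB : ∀ n : ℕ, ∃ M : ℝ, 1 ≤ M ∧ ∀ i, 1 ≤ i → i ≤ n → ∀ x ∈ (Zᶜ : Set (Fin d → ℝ)),
      ‖iteratedFDerivWithin ℝ i Δ Zᶜ x‖ ≤ M * Metric.infDist x Z ^ ((1 : ℤ) - i) := by
    intro n
    induction n with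
    | zero => exact ⟨1, le_refl 1, fun i hi1 hi0 => by omega⟩
    | succ n ih =>
      obtain ⟨M, hM1, hM⟩ := ih
      obtain ⟨B, hB0, hB⟩ := hderiv (n+1)
      refine ⟨max M B, le_trans hM1 (le_max_left _ _), fun i hi1 hin x hx => ?_⟩
      have hz : (0:ℝ) ≤ Metric.infDist x Z ^ ((1 : ℤ) - i) :=
        zpow_nonneg Metric.infDist_nonneg _
      rcases Nat.lt_succ_iff_lt_or_eq.1 (Nat.lt_succ_of_le hin) with h | h
      · exact le_trans (hM i hi1 (Nat.lt_succ_iff.1 h) x hx)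
          (mul_le_mul_of_nonneg_right (le_max_left _ _) hz)
      · rw [h]
        exact le_trans (hB x hx) (mul_le_mul_of_nonneg_right (le_max_right _ _)
          (zpow_nonneg Metric.infDist_nonneg _))
  -- KEY estimate
  have key : ∀ n : ℕ, ∀ ε : ℝ, 0 < ε → ∃ r > 0, ∀ x ∈ (Zᶜ : Set (Fin d → ℝ)),
      Metric.infDist x Z < r →
      ‖iteratedFDerivWithin ℝ n (fun y => g (Δ y)) Zᶜ x‖ ≤ ε * Metric.infDist x Z := by
    intro n ε hε
    obtain ⟨M, hM1, hM⟩ := maxB n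
    have hMpos : (0:ℝ) < M := lt_of_lt_of_le one_pos hM1
    have hden : (0:ℝ) < ((Nat.factorial n : ℕ) : ℝ) * c₂ ^ (n+1) * M ^ n := by positivity
    set ε' := ε / (((Nat.factorial n : ℕ) : ℝ) * c₂ ^ (n+1) * M ^ n) with hε'def
    have hε' : 0 < ε' := div_pos hε hden
    obtain ⟨r₀, hr₀, hr⟩ := gsmall g hgsm hgd n (n+1) ε' hε'
    refine ⟨min (r₀ / c₂) 1, lt_min (div_pos hr₀ hc₂) one_pos, fun x hx hxr => ?_⟩
    set δ := Metric.infDist x Z with hδdef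
    have hδ : 0 < δ := hδpos x hx
    have hδ1 : δ ≤ 1 := le_of_lt (lt_of_lt_of_le hxr (min_le_right _ _))
    have hΔx : Δ x ∈ Set.Ioi (0:ℝ) := hmaps hx
    have hΔr : Δ x < r₀ := by
      calc Δ x ≤ c₂ * δ := (hbound x hx).2
        _ < c₂ * (r₀ / c₂) :=
            mul_lt_mul_of_pos_left (lt_of_lt_of_le hxr (min_le_left _ _)) hc₂
        _ = r₀ := mul_div_cancel₀ _ (ne_of_gt hc₂)
    have hC : ∀ i, i ≤ n → ‖iteratedFDerivWithin ℝ i g (Set.Ioi 0) (Δ x)‖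
        ≤ ε' * c₂ ^ (n+1) * δ ^ (n+1) := by
      intro i hi
      rw [norm_iteratedFDerivWithin_eq_norm_iteratedDerivWithin, Real.norm_eq_abs]
      calc |iteratedDerivWithin i g (Set.Ioi 0) (Δ x)| ≤ ε' * (Δ x) ^ (n+1) :=
            hr i hi (Δ x) hΔx hΔr
        _ ≤ ε' * (c₂ * δ) ^ (n+1) := by
            refine mul_le_mul_of_nonneg_left ?_ (le_of_lt hε')
            exact pow_le_pow_left₀ (le_of_lt hΔx) (hbound x hx).2 _
        _ = ε' * c₂ ^ (n+1) * δ ^ (n+1) := by rw [mul_pow]; ring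
    have hD : ∀ i, 1 ≤ i → i ≤ n → ‖iteratedFDerivWithin ℝ i Δ Zᶜ x‖ ≤ (M / δ) ^ i := by
      intro i hi1 hin
      refine le_trans (hM i hi1 hin x hx) ?_
      have h1 : δ ^ ((1 : ℤ) - i) = δ / δ ^ i := by
        rw [zpow_sub₀ (ne_of_gt hδ), zpow_one, zpow_natCast]
      have h2 : M * δ ≤ M ^ i := by
        calc M * δ ≤ M * 1 := mul_le_mul_of_nonneg_left hδ1 (le_of_lt hMpos)
          _ = M := mul_one M
          _ ≤ M ^ i := le_self_pow₀ hM1 (by omega)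
      rw [h1]
      calc M * (δ / δ ^ i) = (M * δ) / δ ^ i := by ring
        _ ≤ M ^ i / δ ^ i := by gcongr
        _ = (M / δ) ^ i := by rw [div_pow]
    have hcomp := norm_iteratedFDerivWithin_comp_le hgsm hΔ (le_of_lt (coelt n))
      (uniqueDiffOn_Ioi 0) hWu hmaps hx hC hD
    have heq : ((Nat.factorial n : ℕ) : ℝ) * (ε' * c₂ ^ (n+1) * δ ^ (n+1)) * (M / δ) ^ n = ε * δ := by
      rw [hε'def]
      field_simp
      rw [div_pow, pow_succ, mul_comm (δ ^ n) δ, mul_assoc, mul_div_cancel₀ _ (pow_ne_zero n (ne_of_gt hδ)), mul_comm]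
    calc ‖iteratedFDerivWithin ℝ n (fun y => g (Δ y)) Zᶜ x‖
        = ‖iteratedFDerivWithin ℝ n (g ∘ Δ) Zᶜ x‖ := by rw [Function.comp_def]
      _ ≤ ((Nat.factorial n : ℕ) : ℝ) * (ε' * c₂ ^ (n+1) * δ ^ (n+1)) * (M / δ) ^ n := hcomp
      _ = ε * δ := heq
  -- the formal Taylor series of the extension
  classical
  set p : (Fin d → ℝ) → FormalMultilinearSeries ℝ (Fin d → ℝ) ℝ :=
    fun x n => Set.indicator Zᶜ (fun y => iteratedFDerivWithin ℝ n (fun z => g (Δ z)) Zᶜ y) x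
    with hp
  have hTW : HasFTaylorSeriesUpToOn (⊤ : ℕ∞) (fun x => g (Δ x))
      (ftaylorSeriesWithin ℝ (fun x => g (Δ x)) Zᶜ) Zᶜ := hf.ftaylorSeriesWithin hWu
  have hfd : ∀ (m : ℕ) (x : Fin d → ℝ),
      HasFDerivAt (fun y => p y m) (p x (m+1)).curryLeft x := by
    intro m x
    by_cases hx : x ∈ (Zᶜ : Set (Fin d → ℝ))
    · have h1 : HasFDerivWithinAt
          (fun y => iteratedFDerivWithin ℝ m (fun z => g (Δ z)) Zᶜ y)
          (iteratedFDerivWithin ℝ (m+1) (fun z => g (Δ z)) Zᶜ x).curryLeft Zᶜ x :=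
        hTW.fderivWithin m (coelt m) x hx
      have h2 := h1.hasFDerivAt (hWo.mem_nhds hx)
      have hev : (fun y => p y m)
          =ᶠ[𝓝 x] (fun y => iteratedFDerivWithin ℝ m (fun z => g (Δ z)) Zᶜ y) :=
        Filter.eventually_of_mem (hWo.mem_nhds hx)
          (fun y hy => Set.indicator_of_mem hy _)
      have hval : p x (m+1) = iteratedFDerivWithin ℝ (m+1) (fun z => g (Δ z)) Zᶜ x :=
        Set.indicator_of_mem hx _
      rw [hval]
      exact h2.congr_of_eventuallyEq hev
    · have hpx : p x (m+1) = 0 := Set.indicator_of_notMem hx _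
      have hcurry : (p x (m+1)).curryLeft = 0 := by
        rw [hpx]; ext v w; simp
      rw [hcurry]
      rw [hasFDerivAt_iff_isLittleO_nhds_zero]
      rw [Asymptotics.isLittleO_iff]
      intro c hc0
      obtain ⟨r, hrpos, hrb⟩ := key m c hc0
      filter_upwards [Metric.ball_mem_nhds (0 : Fin d → ℝ) hrpos] with h hh
      have hpx0 : p x m = 0 := Set.indicator_of_notMem hx _
      have hxZ : x ∈ Z := not_not.1 (by simpa using hx)
      rw [hpx0, sub_zero, ContinuousLinearMap.zero_apply, sub_zero]
      by_cases hy : x + h ∈ (Zᶜ : Set (Fin d → ℝ))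
      · have hδy : Metric.infDist (x + h) Z ≤ ‖h‖ := by
          have h3 := Metric.infDist_le_dist_of_mem (x := x + h) hxZ
          simpa [dist_eq_norm] using h3
        have hhr : ‖h‖ < r := by simpa [dist_eq_norm] using hh
        have h4 := hrb (x + h) hy (lt_of_le_of_lt hδy hhr)
        have h5 : p (x + h) m
            = iteratedFDerivWithin ℝ m (fun z => g (Δ z)) Zᶜ (x + h) :=
          Set.indicator_of_mem hy _
        rw [h5]
        calc ‖iteratedFDerivWithin ℝ m (fun z => g (Δ z)) Zᶜ (x + h)‖
            ≤ c * Metric.infDist (x + h) Z := h4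
          _ ≤ c * ‖h‖ := mul_le_mul_of_nonneg_left hδy (le_of_lt hc0)
      · have h5 : p (x + h) m = 0 := Set.indicator_of_notMem hy _
        rw [h5]
        simpa using mul_nonneg (le_of_lt hc0) (norm_nonneg h)
  have hT : HasFTaylorSeriesUpTo (⊤ : ℕ∞) (Set.indicator Zᶜ fun x => g (Δ x)) p := by
    refine ⟨fun x => ?_, fun m _ x => hfd m x,
      fun m _ => continuous_iff_continuousAt.2 fun x => (hfd m x).continuousAt⟩
    by_cases hx : x ∈ (Zᶜ : Set (Fin d → ℝ))
    · rw [hp]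
      simp only [Set.indicator_of_mem hx, ContinuousMultilinearMap.curry0_apply]
      rw [iteratedFDerivWithin_zero_apply]
    · rw [hp]
      simp [Set.indicator_of_notMem hx]
  refine ⟨hT.contDiff, fun n x hxZ => ?_⟩
  rw [← hT.eq_iteratedFDeriv (by exact_mod_cast le_top) x]
  exact Set.indicator_of_notMem (by simp [hxZ]) _
end

section
/- Let (a_m)_{m≥0} be a sequence of nonnegative real numbers. Then there exists a non-increasing sequence (c_m)_{m≥0} of positive real numbers such that for all integers n ≥ 1 and r ≥ 0, the family of nonnegative reals (c_{m_1} c_{m_2} ⋯ c_{m_n} · a_{m_1 + m_2 + ⋯ + m_n + r}) indexed by tuples (m_1, …, m_n) ∈ ℕ^n is summable, i.e. Σ_{m_1,…,m_n ≥ 0} c_{m_1} ⋯ c_{m_n} a_{m_1+⋯+m_n+r} < ∞. -/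
/-!
Let `B ≥ 1` be a monotone majorant of `a` and `c m = 2⁻ᵐ / B (m²)`. If `M` is the largest
coordinate of `m : Fin n → ℕ`, then `∑ mᵢ + r ≤ n M + r ≤ max (M²) (n (n + r) + r)`, so
`a (∑ mᵢ + r) ≤ B (M²) B (n (n + r) + r)`. The factor `B (M²)` is cancelled by `c M`, and
`c (mᵢ) ≤ 2^(-mᵢ)` for the other factors, so the family is dominated by a constant multiple of
the summable family `∏ 2^(-mᵢ)`.
-/

open Finset

theorem summable_pi_prod_of_nonneg {β : Type*} {g : β → ℝ} (hg : Summable g) (hg0 : ∀ k, 0 ≤ g k)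
    (n : ℕ) : Summable fun m : Fin n → β => ∏ i, g (m i) := by
  induction n with
  | zero => exact summable_of_hasFiniteSupport (Set.toFinite _)
  | succ n ih =>
    rw [← (Fin.consEquiv fun _ : Fin (n + 1) => β).summable_iff]
    refine (hg.mul_of_nonneg ih hg0 fun m => prod_nonneg fun i _ => hg0 _).congr fun p => ?_
    simp [Fin.prod_univ_succ]

theorem Finset.prod_le_of_nonneg_of_le_one {ι R : Type*} [CommSemiring R] [PartialOrder R]
    [IsOrderedRing R] {s : Finset ι} {f : ι → R}
    (h0 : ∀ i ∈ s, 0 ≤ f i) (h1 : ∀ i ∈ s, f i ≤ 1) {j : ι} (hj : j ∈ s) :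
    ∏ i ∈ s, f i ≤ f j := by
  classical
  rw [← mul_prod_erase s f hj]
  exact mul_le_of_le_one_right (h0 j hj)
    (prod_le_one (fun i hi => h0 i (mem_of_mem_erase hi)) fun i hi => h1 i (mem_of_mem_erase hi))

theorem le_max_mul_self_of_le_mul_add {x n M r : ℕ} (hx : x ≤ n * M + r) :
    x ≤ max (M * M) (n * (n + r) + r) := by
  rcases le_or_gt (n + r) M with h | h
  · exact le_max_of_le_left (by nlinarith)
  · exact le_max_of_le_right (by nlinarith)

theorem Monotone.le_mul_of_le_max {α : Type*} [LinearOrder α] {B : α → ℝ} (hB : Monotone B)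
    (hB1 : ∀ k, 1 ≤ B k) {x y z : α} (hx : x ≤ max y z) : B x ≤ B y * B z :=
  calc B x ≤ max (B y) (B z) := hB.map_max ▸ hB hx
    _ ≤ B y * B z := max_le (le_mul_of_one_le_right (by linarith [hB1 y]) (hB1 z))
      (le_mul_of_one_le_left (by linarith [hB1 z]) (hB1 y))

noncomputable def dampedWeight (B : ℕ → ℝ) (m : ℕ) : ℝ := (1 / 2) ^ m * (B (m * m))⁻¹

section DampedWeight

variable {B : ℕ → ℝ} (hB : Monotone B) (hB1 : ∀ k, 1 ≤ B k)
include hB1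

theorem dampedWeight_pos (m : ℕ) : 0 < dampedWeight B m :=
  mul_pos (by positivity) (inv_pos.2 (by linarith [hB1 (m * m)]))

include hB in
theorem dampedWeight_antitone : Antitone (dampedWeight B) := fun m m' h =>
  mul_le_mul (pow_le_pow_of_le_one (by norm_num) (by norm_num) h)
    (inv_anti₀ (by linarith [hB1 (m * m)]) (hB (Nat.mul_le_mul h h)))
    (inv_nonneg.2 (by linarith [hB1 (m' * m')])) (by positivity)

include hB in
theorem prod_dampedWeight_mul_le {a : ℕ → ℝ} (ha0 : ∀ k, 0 ≤ a k) (haB : ∀ k, a k ≤ B k)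
    {n : ℕ} [NeZero n] (r : ℕ) (m : Fin n → ℕ) :
    (∏ i, dampedWeight B (m i)) * a (∑ i, m i + r) ≤
      B (n * (n + r) + r) * ∏ i, (1 / 2 : ℝ) ^ m i := by
  have hB0 : ∀ k, 0 < B k := fun k => by linarith [hB1 k]
  obtain ⟨j, hj⟩ := Finite.exists_max m
  have hsum : ∑ i, m i ≤ n * m j := by
    simpa using sum_le_card_nsmul univ m (m j) fun i _ => hj i
  have haM : a (∑ i, m i + r) ≤ B (m j * m j) * B (n * (n + r) + r) :=
    (haB _).trans (hB.le_mul_of_le_max hB1 (le_max_mul_self_of_le_mul_add (by omega)))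
  have hdamp : ∏ i, (B (m i * m i))⁻¹ ≤ (B (m j * m j))⁻¹ :=
    prod_le_of_nonneg_of_le_one (fun i _ => (inv_pos.2 (hB0 _)).le)
      (fun i _ => inv_le_one_of_one_le₀ (hB1 _)) (mem_univ j)
  calc (∏ i, dampedWeight B (m i)) * a (∑ i, m i + r)
      = (∏ i, (1 / 2 : ℝ) ^ m i) * (∏ i, (B (m i * m i))⁻¹) * a (∑ i, m i + r) := by
        simp only [dampedWeight, prod_mul_distrib]
    _ ≤ (∏ i, (1 / 2 : ℝ) ^ m i) * (B (m j * m j))⁻¹ *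
          (B (m j * m j) * B (n * (n + r) + r)) := by
        gcongr
        case c0 => exact ha0 _
        case b0 => exact mul_nonneg (by positivity) (inv_pos.2 (hB0 _)).le
    _ = B (n * (n + r) + r) * ∏ i, (1 / 2 : ℝ) ^ m i := by
        field_simp [(hB0 (m j * m j)).ne']

end DampedWeight

/-- Given nonnegative `(a_m)`, there is a non-increasing positive sequence
`(c_m)` such that `Σ_{m₁,…,m_n} c_{m₁}⋯c_{m_n} a_{m₁+⋯+m_n+r} < ∞` for all `n ≥ 1, r ≥ 0`. -/
theorem stmt5 (a : ℕ → ℝ) (ha : ∀ m, 0 ≤ a m) :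
    ∃ c : ℕ → ℝ, (∀ m, 0 < c m) ∧ Antitone c ∧
      ∀ (n : ℕ), 1 ≤ n → ∀ r : ℕ,
        Summable (fun m : Fin n → ℕ => (∏ i, c (m i)) * a ((∑ i, m i) + r)) := by
  let A : ℕ → ℝ := fun k => max 1 (a k)
  let B : ℕ → ℝ := partialSups A
  have hB : Monotone B := (partialSups A).monotone
  have hB1 : ∀ k, 1 ≤ B k := fun k => (le_max_left 1 (a k)).trans (le_partialSups A k)
  have haB : ∀ k, a k ≤ B k := fun k => (le_max_right 1 (a k)).trans (le_partialSups A k)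
  refine ⟨dampedWeight B, dampedWeight_pos hB1, dampedWeight_antitone hB hB1, fun n hn r => ?_⟩
  have : NeZero n := ⟨by omega⟩
  have hgeom : Summable fun m : Fin n → ℕ => ∏ i, (1 / 2 : ℝ) ^ m i :=
    summable_pi_prod_of_nonneg (summable_geometric_of_lt_one (by norm_num) (by norm_num))
      (fun k => by positivity) n
  exact (hgeom.mul_left _).of_nonneg_of_le
    (fun m => mul_nonneg (prod_nonneg fun i _ => (dampedWeight_pos hB1 _).le) (ha _))
    (prod_dampedWeight_mul_le hB hB1 ha haB r)
end

section
/- Let X_1, X_2, X_3, … be a sequence of smooth vector fields on ℝ^d and let φ : ℝ^d → ℂ be smooth and compactly supported. Then there exists a sequence (c_m)_{m≥0} of positive real numbers such that for every sequence (a_m)_{m≥0} of complex numbers with |a_m| ≤ c_m for all m, the following holds: for all integers n ≥ 1, all indices i_1, …, i_n ≥ 1, and every multi-index α ∈ ℕ^d, the family (|a_{m_1}| ⋯ |a_{m_n}| · ‖∂^α X_{i_1}^{m_1} ⋯ X_{i_n}^{m_n} φ‖_∞) indexed by (m_1, …, m_n) ∈ ℕ^n is summable. -/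
/-- The action of a vector field `X : ℝ^d → ℝ^d` on a function:
`(Xφ)(x) = Dφ(x)[X(x)]`. -/
noncomputable def vfApply {d : ℕ} (X : (Fin d → ℝ) → (Fin d → ℝ))
    (φ : (Fin d → ℝ) → ℂ) : (Fin d → ℝ) → ℂ :=
  fun x => fderiv ℝ φ x (X x)

/-- The partial derivative in the `i`-th coordinate direction. -/
noncomputable def pd {d : ℕ} (i : Fin d) (φ : (Fin d → ℝ) → ℂ) : (Fin d → ℝ) → ℂ :=
  fun x => fderiv ℝ φ x (Pi.single i 1)

/-- The iterated partial derivative `∂^α` associated to a multi-index `α ∈ ℕ^d`. -/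
noncomputable def mpd {d : ℕ} (α : Fin d → ℕ) (φ : (Fin d → ℝ) → ℂ) : (Fin d → ℝ) → ℂ :=
  ((List.finRange d).map (fun i => (pd i)^[α i])).foldr (fun op ψ => op ψ) φ

/-!
Enumerate the countably many parameters `(n, i, α)` and let `B T` dominate every sup norm
`‖∂^α X_{i₁}^{m₁} ⋯ X_{iₙ}^{mₙ} φ‖_∞` whose parameter code and exponents `m_j` are all at most `T`;
take `c T = 2⁻ᵀ / (1 + B T)`. Once the largest exponent `T = m_j` exceeds the code of the
parameters, the factor `|a_{m_j}| ≤ c T` absorbs the sup norm, so the family is eventually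
dominated by `∏ⱼ 2^{-m_j}`, which is summable over `ℕⁿ`.
-/

open Filter Finset

theorem summable_prod_apply_of_nonneg {ι β : Type*} [Fintype ι] {g : β → ℝ} (hg0 : 0 ≤ g)
    (hg : Summable g) : Summable fun m : ι → β => ∏ j, g (m j) := by
  classical
  refine summable_of_sum_le (c := (∑' b, g b) ^ Fintype.card ι)
    (fun m => prod_nonneg fun j _ => hg0 _) fun u => ?_
  set t : Finset β := u.biUnion fun m => univ.image m
  have hut : u ⊆ Fintype.piFinset fun _ => t := fun m hm =>
    Fintype.mem_piFinset.2 fun j => mem_biUnion.2 ⟨m, hm, mem_image_of_mem m (mem_univ j)⟩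
  calc ∑ m ∈ u, ∏ j, g (m j) ≤ ∑ m ∈ Fintype.piFinset (fun _ => t), ∏ j, g (m j) :=
        sum_le_sum_of_subset_of_nonneg hut fun m _ _ => prod_nonneg fun j _ => hg0 _
    _ = (∑ b ∈ t, g b) ^ Fintype.card ι := by rw [← prod_univ_sum, prod_const, card_univ]
    _ ≤ (∑' b, g b) ^ Fintype.card ι :=
        pow_le_pow_left₀ (sum_nonneg fun b _ => hg0 b) (hg.sum_le_tsum t fun b _ => hg0 b) _

theorem eventually_cofinite_exists_le_apply {ι : Type*} [Finite ι] (N : ℕ) :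
    ∀ᶠ m : ι → ℕ in cofinite, ∃ j, N ≤ m j := by
  refine (Set.Finite.pi fun _ => Set.finite_Iio N).subset fun m hm => ?_
  simpa using hm

theorem summable_prod_mul_of_eventually_le {ι : Type*} [Fintype ι] {w : ℕ → ℝ}
    {f : (ι → ℕ) → ℝ} (hw0 : 0 ≤ w) (hw : ∀ k, w k ≤ (1 / 2) ^ k) (hf0 : 0 ≤ f)
    (hf : ∀ᶠ m in cofinite, ∀ j, (∀ i, m i ≤ m j) → w (m j) * f m ≤ (1 / 2) ^ m j) :
    Summable fun m => (∏ j, w (m j)) * f m := by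
  classical
  rcases isEmpty_or_nonempty ι with hι | hι
  · exact .of_finite
  refine .of_norm_bounded_eventually (g := fun m : ι → ℕ => ∏ j, ((1 : ℝ) / 2) ^ m j)
    (summable_prod_apply_of_nonneg (fun k => by positivity)
      (summable_geometric_of_lt_one (by norm_num) (by norm_num))) ?_
  filter_upwards [hf] with m hm
  obtain ⟨j, hj⟩ := Finite.exists_max m
  rw [Real.norm_of_nonneg (mul_nonneg (prod_nonneg fun i _ => hw0 _) (hf0 m)),
    ← mul_prod_erase univ _ (mem_univ j), ← mul_prod_erase univ _ (mem_univ j)]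
  calc w (m j) * (∏ i ∈ univ.erase j, w (m i)) * f m
      = (w (m j) * f m) * ∏ i ∈ univ.erase j, w (m i) := by ring
    _ ≤ (1 / 2) ^ m j * ∏ i ∈ univ.erase j, ((1 : ℝ) / 2) ^ m i :=
        mul_le_mul (hm j hj) (prod_le_prod (fun i _ => hw0 _) fun i _ => hw _)
          (prod_nonneg fun i _ => hw0 _) (by positivity)

section Diagonal

variable {P : Type*} [Encodable P] {κ : P → Type*} [∀ p, Fintype (κ p)]

open Classical in
noncomputable def levelBound (S : (p : P) → (κ p → ℕ) → ℝ) (T : ℕ) : ℝ :=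
  ∑ k ∈ range (T + 1), ∑ p ∈ (Encodable.decode k : Option P).toFinset,
    ∑ m ∈ Fintype.piFinset fun _ : κ p => range (T + 1), S p m

variable {S : (p : P) → (κ p → ℕ) → ℝ}

theorem levelBound_nonneg (hS : ∀ p, 0 ≤ S p) (T : ℕ) : 0 ≤ levelBound S T :=
  sum_nonneg fun _ _ => sum_nonneg fun p _ => sum_nonneg fun m _ => hS p m

theorem le_levelBound (hS : ∀ p, 0 ≤ S p) {p : P} {m : κ p → ℕ} {T : ℕ}
    (hp : Encodable.encode p ≤ T) (hm : ∀ j, m j ≤ T) : S p m ≤ levelBound S T := by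
  classical
  have hmT : m ∈ Fintype.piFinset fun _ : κ p => range (T + 1) :=
    Fintype.mem_piFinset.2 fun j => mem_range.2 (Nat.lt_succ_of_le (hm j))
  have hpk : p ∈ (Encodable.decode (Encodable.encode p) : Option P).toFinset := by
    simp [Encodable.encodek]
  have hk : Encodable.encode p ∈ range (T + 1) := mem_range.2 (Nat.lt_succ_of_le hp)
  refine (single_le_sum (fun m _ => hS p m) hmT).trans ?_
  refine (single_le_sum (f := fun p => ∑ m ∈ Fintype.piFinset fun _ : κ p => range (T + 1), S p m)
    (fun p _ => sum_nonneg fun m _ => hS p m) hpk).trans ?_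
  exact single_le_sum (f := fun k => ∑ p ∈ (Encodable.decode k : Option P).toFinset,
      ∑ m ∈ Fintype.piFinset fun _ : κ p => range (T + 1), S p m)
    (fun _ _ => sum_nonneg fun p _ => sum_nonneg fun m _ => hS p m) hk

theorem exists_pos_forall_summable_prod_mul (hS : ∀ p, 0 ≤ S p) :
    ∃ c : ℕ → ℝ, (∀ k, 0 < c k) ∧ ∀ w : ℕ → ℝ, 0 ≤ w → (∀ k, w k ≤ c k) →
      ∀ p, Summable fun m : κ p → ℕ => (∏ j, w (m j)) * S p m := by
  have hB : ∀ T, 0 < 1 + levelBound S T := fun T => by linarith [levelBound_nonneg hS T]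
  refine ⟨fun T => (1 / 2) ^ T / (1 + levelBound S T), fun T => div_pos (by positivity) (hB T),
    fun w hw0 hw p => summable_prod_mul_of_eventually_le hw0 (fun k => (hw k).trans
      (div_le_self (by positivity) (by linarith [levelBound_nonneg hS k]))) (hS p) ?_⟩
  filter_upwards [eventually_cofinite_exists_le_apply (Encodable.encode p)] with m ⟨i, hi⟩ j hj
  have hSm : S p m ≤ 1 + levelBound S (m j) := by
    linarith [le_levelBound hS (hi.trans (hj i)) hj]
  calc w (m j) * S p m ≤ (1 / 2) ^ m j / (1 + levelBound S (m j)) * (1 + levelBound S (m j)) :=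
        mul_le_mul (hw _) hSm (hS p m) (div_pos (by positivity) (hB _)).le
    _ = (1 / 2) ^ m j := div_mul_cancel₀ _ (hB _).ne'

end Diagonal

theorem stmt6_general (d : ℕ) (X : ℕ → (Fin d → ℝ) → (Fin d → ℝ))
    (φ : (Fin d → ℝ) → ℂ) :
    ∃ c : ℕ → ℝ, (∀ m, 0 < c m) ∧
      ∀ a : ℕ → ℂ, (∀ m, ‖a m‖ ≤ c m) →
        ∀ (n : ℕ), 1 ≤ n → ∀ (idx : Fin n → ℕ) (α : Fin d → ℕ),
          Summable (fun m : Fin n → ℕ =>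
            (∏ j, ‖a (m j)‖) *
              ⨆ x, ‖mpd α ((List.ofFn fun j => (vfApply (X (idx j)))^[m j]).foldr
                  (fun op ψ => op ψ) φ) x‖) := by
  obtain ⟨c, hc0, hc⟩ := exists_pos_forall_summable_prod_mul
    (P := (n : ℕ) × (Fin n → ℕ) × (Fin d → ℕ)) (κ := fun p => Fin p.1)
    (S := fun p m => ⨆ x, ‖mpd p.2.2 ((List.ofFn fun j => (vfApply (X (p.2.1 j)))^[m j]).foldr
      (fun op ψ => op ψ) φ) x‖)
    fun p m => Real.iSup_nonneg fun x => norm_nonneg _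
  exact ⟨c, hc0, fun a ha n _ idx α =>
    hc (fun k => ‖a k‖) (fun k => norm_nonneg _) ha ⟨n, idx, α⟩⟩

/-- Coefficients can be chosen small enough that all the series defining
compositions `P(X_{i₁}) ⋯ P(X_{i_n}) φ`, differentiated by any `∂^α`, are summable
in sup norm. -/
theorem stmt6 (d : ℕ) (X : ℕ → (Fin d → ℝ) → (Fin d → ℝ))
    (hX : ∀ i, ContDiff ℝ (⊤ : ℕ∞) (X i))
    (φ : (Fin d → ℝ) → ℂ) (hφ : ContDiff ℝ (⊤ : ℕ∞) φ) (hφc : HasCompactSupport φ) :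
    ∃ c : ℕ → ℝ, (∀ m, 0 < c m) ∧
      ∀ a : ℕ → ℂ, (∀ m, ‖a m‖ ≤ c m) →
        ∀ (n : ℕ), 1 ≤ n → ∀ (idx : Fin n → ℕ) (α : Fin d → ℕ),
          Summable (fun m : Fin n → ℕ =>
            (∏ j, ‖a (m j)‖) *
              ⨆ x, ‖mpd α ((List.ofFn fun j => (vfApply (X (idx j)))^[m j]).foldr
                  (fun op ψ => op ψ) φ) x‖) :=
  stmt6_general d X φ
end

section
/- Let (f_k)_{k≥0} be a sequence of functions (0,∞) → ℝ such that for every k and every p ∈ ℕ, f_k(t)·t^{−p} → 0 as t → 0⁺. Then there exists a smooth function g : (0,∞) → ℝ with g(t) > 0 for all t > 0, such that every derivative of g vanishes at 0 (i.e. for every j ∈ ℕ, g^{(j)}(t) → 0 as t → 0⁺), and such that f_k(t)/g(t) → 0 as t → 0⁺ for every k. -/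
open Filter Set Topology


private lemma chi_cont (j : ℕ) : Continuous (iteratedDeriv j Real.smoothTransition) :=
  Real.smoothTransition.contDiff.continuous_iteratedDeriv j (by exact_mod_cast le_top)

private lemma chi_left (j : ℕ) {x : ℝ} (hx : x ≤ 0) :
    iteratedDeriv j Real.smoothTransition x = 0 := by
  have hIio : ∀ y : ℝ, y < 0 → iteratedDeriv j Real.smoothTransition y = 0 := by
    intro y hy
    have hev : Real.smoothTransition =ᶠ[𝓝 y] (fun _ => (0:ℝ)) := by
      filter_upwards [Iio_mem_nhds hy] with z hz
      exact Real.smoothTransition.zero_of_nonpos hz.le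
    rw [hev.iteratedDeriv_eq]
    simp [iteratedDeriv_eq_iteratedFDeriv]
  rcases hx.lt_or_eq with h | h
  · exact hIio x h
  · subst h
    have h1 : Tendsto (iteratedDeriv j Real.smoothTransition) (𝓝[<] (0:ℝ))
        (𝓝 (iteratedDeriv j Real.smoothTransition 0)) :=
      ((chi_cont j).continuousAt).continuousWithinAt
    have h2 : Tendsto (iteratedDeriv j Real.smoothTransition) (𝓝[<] (0:ℝ)) (𝓝 0) := by
      refine Tendsto.congr' ?_ tendsto_const_nhds
      filter_upwards [self_mem_nhdsWithin] with y hy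
      exact (hIio y hy).symm
    exact tendsto_nhds_unique h1 h2

private lemma chi_right (j : ℕ) (hj : j ≠ 0) {x : ℝ} (hx : 1 ≤ x) :
    iteratedDeriv j Real.smoothTransition x = 0 := by
  have hIoi : ∀ y : ℝ, 1 < y → iteratedDeriv j Real.smoothTransition y = 0 := by
    intro y hy
    have hev : Real.smoothTransition =ᶠ[𝓝 y] (fun _ => (1:ℝ)) := by
      filter_upwards [Ioi_mem_nhds hy] with z hz
      exact Real.smoothTransition.one_of_one_le hz.le
    rw [hev.iteratedDeriv_eq]
    simp [iteratedDeriv_eq_iteratedFDeriv, iteratedFDeriv_const_of_ne hj]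
  rcases hx.lt_or_eq with h | h
  · exact hIoi x h
  · subst h
    have h1 : Tendsto (iteratedDeriv j Real.smoothTransition) (𝓝[>] (1:ℝ))
        (𝓝 (iteratedDeriv j Real.smoothTransition 1)) :=
      ((chi_cont j).continuousAt).continuousWithinAt
    have h2 : Tendsto (iteratedDeriv j Real.smoothTransition) (𝓝[>] (1:ℝ)) (𝓝 0) := by
      refine Tendsto.congr' ?_ tendsto_const_nhds
      filter_upwards [self_mem_nhdsWithin] with y hy
      exact (hIoi y hy).symm
    exact tendsto_nhds_unique h1 h2

private lemma chi_bound (j : ℕ) : ∃ K : ℝ, 0 < K ∧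
    ∀ x : ℝ, |iteratedDeriv j Real.smoothTransition x| ≤ K := by
  rcases eq_or_ne j 0 with rfl | hj
  · refine ⟨1, one_pos, fun x => ?_⟩
    rw [iteratedDeriv_zero, abs_le]
    exact ⟨by linarith [Real.smoothTransition.nonneg x], Real.smoothTransition.le_one x⟩
  · obtain ⟨C, hC⟩ := (isCompact_Icc (a := (0:ℝ)) (b := 1)).exists_bound_of_continuousOn
      (chi_cont j).continuousOn
    refine ⟨max C 1, lt_max_of_lt_right one_pos, fun x => ?_⟩
    rcases le_or_gt x 0 with h | h
    · rw [chi_left j h]; simp [le_max_iff]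
    rcases le_or_gt 1 x with h1 | h1
    · rw [chi_right j hj h1]; simp [le_max_iff]
    · exact le_trans (by simpa [Real.norm_eq_abs] using hC x ⟨h.le, h1.le⟩) (le_max_left _ _)

private lemma iteratedDeriv_fsum {u : Finset ℕ} {F : ℕ → ℝ → ℝ} {j : ℕ}
    (h : ∀ m ∈ u, ContDiff ℝ j (F m)) (x : ℝ) :
    iteratedDeriv j (fun t => ∑ m ∈ u, F m t) x = ∑ m ∈ u, iteratedDeriv j (F m) x := by
  simp only [iteratedDeriv_eq_iteratedFDeriv]
  rw [iteratedFDeriv_sum h]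
  simp

-- iterated derivative of t ↦ c * χ (a * t - 1)
private lemma deriv_term (j : ℕ) (c a : ℝ) (x : ℝ) :
    iteratedDeriv j (fun t => c * Real.smoothTransition (a * t - 1)) x
      = c * (a ^ j * iteratedDeriv j Real.smoothTransition (a * x - 1)) := by
  have hψ : ContDiff ℝ j (fun s : ℝ => Real.smoothTransition (s - 1)) :=
    Real.smoothTransition.contDiff.comp (contDiff_id.sub contDiff_const)
  have hφ : ContDiff ℝ j (fun t : ℝ => Real.smoothTransition (a * t - 1)) :=
    Real.smoothTransition.contDiff.comp ((contDiff_const.mul contDiff_id).sub contDiff_const)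
  have h1 : iteratedDeriv j (fun t => c * Real.smoothTransition (a * t - 1)) x
      = c * iteratedDeriv j (fun t => Real.smoothTransition (a * t - 1)) x := by
    rw [← iteratedDerivWithin_univ, ← iteratedDerivWithin_univ]
    exact iteratedDerivWithin_const_mul (mem_univ x) uniqueDiffOn_univ c hφ.contDiffWithinAt
  rw [h1]
  have h2 : iteratedDeriv j (fun t => Real.smoothTransition (a * t - 1)) x
      = a ^ j * iteratedDeriv j (fun s : ℝ => Real.smoothTransition (s - 1)) (a * x) := by
    have := iteratedDeriv_comp_const_mul (n := j) hψ a
    exact congrFun this x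
  rw [h2]
  have h3 : iteratedDeriv j (fun s : ℝ => Real.smoothTransition (s - 1)) (a * x)
      = iteratedDeriv j Real.smoothTransition (a * x + (-1)) := by
    have := iteratedDeriv_comp_add_const j Real.smoothTransition (-1)
    have := congrFun this (a * x)
    simpa [sub_eq_add_neg] using this
  rw [h3]
  ring_nf


/-- Given countably many functions vanishing faster than every power of `t`
at `0⁺`, there is a positive smooth function `g` on `(0,∞)`, flat at `0`, that they all
vanish faster than. -/
theorem stmt12 (f : ℕ → ℝ → ℝ)
    (hf : ∀ (k p : ℕ), Filter.Tendsto (fun t => f k t / t ^ p)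
      (nhdsWithin 0 (Set.Ioi 0)) (nhds 0)) :
    ∃ g : ℝ → ℝ, ContDiffOn ℝ (⊤ : ℕ∞) g (Set.Ioi 0) ∧ (∀ t, 0 < t → 0 < g t) ∧
      (∀ j : ℕ, Filter.Tendsto (fun t => iteratedDerivWithin j g (Set.Ioi 0) t)
        (nhdsWithin 0 (Set.Ioi 0)) (nhds 0)) ∧
      ∀ k, Filter.Tendsto (fun t => f k t / g t) (nhdsWithin 0 (Set.Ioi 0)) (nhds 0) := by
  classical
  -- Step A: radii where |f k t| ≤ t ^ n for all k ≤ n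
  have hD : ∀ n : ℕ, ∃ d : ℝ, 0 < d ∧ ∀ t : ℝ, 0 < t → t < d → ∀ k ≤ n, |f k t| ≤ t ^ n := by
    intro n
    have h1 : ∀ k, ∀ᶠ t in 𝓝[>] (0:ℝ), |f k t| ≤ t ^ n := by
      intro k
      have hev := (hf k n).eventually (Metric.ball_mem_nhds (0:ℝ) one_pos)
      filter_upwards [hev, self_mem_nhdsWithin] with t h1 h2
      have htp : (0:ℝ) < t ^ n := pow_pos h2 n
      have h4 : |f k t| / |t| ^ n < 1 := by
        simpa [Real.dist_eq, abs_div, abs_pow] using h1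
      rw [abs_of_pos (show (0:ℝ) < t from h2), div_lt_one htp] at h4
      exact h4.le
    have h2 : ∀ᶠ t in 𝓝[>] (0:ℝ), ∀ k ∈ Finset.range (n+1), |f k t| ≤ t ^ n :=
      (Finset.range (n+1)).eventually_all.2 fun k _ => h1 k
    obtain ⟨d, hd, hball⟩ := Metric.mem_nhdsWithin_iff.1 h2
    refine ⟨d, hd, fun t ht htd k hk => ?_⟩
    have hmem : t ∈ Metric.ball (0:ℝ) d ∩ Ioi 0 :=
      ⟨by simpa [Real.dist_eq, abs_of_pos ht] using htd, mem_Ioi.2 ht⟩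
    exact hball hmem k (Finset.mem_range.2 (Nat.lt_succ_of_le hk))
  choose D hDpos hDbound using hD
  -- Definitions
  let N : ℕ → ℕ := fun i => Nat.findGreatest (fun n => (2:ℝ)⁻¹ ^ i < D n) i
  let E : ℕ → ℕ := fun i => i + (i - 1) * (N (i - 1) - 2)
  let ε : ℕ → ℝ := fun i => (2:ℝ)⁻¹ ^ E i
  let u : ℕ → ℝ → ℝ := fun m t => ε m * Real.smoothTransition (2 ^ (m + 1) * t - 1)
  let g : ℝ → ℝ := fun t => ∑' m, u m t
  let γ : ℕ → ℝ := fun i => ∑' m, ε (m + i)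
  -- Basic facts
  have hεpos : ∀ i, 0 < ε i := fun i => pow_pos (by norm_num) (E i)
  have hεle : ∀ i, ε i ≤ (2:ℝ)⁻¹ ^ i := fun i =>
    pow_le_pow_of_le_one (by norm_num) (by norm_num) (Nat.le_add_right _ _)
  have hgeom : Summable (fun i : ℕ => (2:ℝ)⁻¹ ^ i) :=
    summable_geometric_of_lt_one (by norm_num) (by norm_num)
  have hsum : Summable ε := Summable.of_nonneg_of_le (fun i => (hεpos i).le) hεle hgeom
  have huc : ∀ (n : ℕ∞) (m : ℕ), ContDiff ℝ n (u m) := fun n m =>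
    contDiff_const.mul (Real.smoothTransition.contDiff.comp
      ((contDiff_const.mul contDiff_id).sub contDiff_const))
  have huc' : ∀ (j m : ℕ), ContDiff ℝ j (u m) := fun j m => by exact_mod_cast huc j m
  have hu0 : ∀ m t, 0 ≤ u m t := fun m t =>
    mul_nonneg (hεpos m).le (Real.smoothTransition.nonneg _)
  have hule : ∀ m t, u m t ≤ ε m := fun m t =>
    mul_le_of_le_one_right (hεpos m).le (Real.smoothTransition.le_one _)
  have hus : ∀ t, Summable fun m => u m t := fun t =>
    Summable.of_nonneg_of_le (fun m => hu0 m t) (fun m => hule m t) hsum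
  have hγsum : ∀ i, Summable fun m => ε (m + i) := fun i => (summable_nat_add_iff i).2 hsum
  have hγpos : ∀ i, 0 < γ i := fun i => Summable.tsum_pos (hγsum i) (fun m => (hεpos _).le) 0 (hεpos _)
  have hεγ : ∀ i, ε i ≤ γ i := fun i => by
    simpa using Summable.le_tsum (hγsum i) 0 (fun m _ => (hεpos _).le)
  have hγle : ∀ i, γ i ≤ (2:ℝ)⁻¹ ^ i * 2 := by
    intro i
    have h1 : γ i ≤ ∑' m : ℕ, (2:ℝ)⁻¹ ^ (m + i) :=
      Summable.tsum_le_tsum (fun m => hεle (m + i)) (hγsum i) ((summable_nat_add_iff i).2 hgeom)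
    have h2 : ∑' m : ℕ, (2:ℝ)⁻¹ ^ (m + i) = (2:ℝ)⁻¹ ^ i * 2 := by
      simp_rw [pow_add]
      rw [tsum_mul_right, tsum_geometric_of_lt_one (by norm_num) (by norm_num)]
      norm_num [mul_comm]
    linarith
  -- Band lemma
  have hband : ∀ (I : ℕ) (t : ℝ), 0 < t → t < (2:ℝ)⁻¹ ^ I →
      ∃ i, I ≤ i ∧ (2:ℝ)⁻¹ ^ (i + 1) < t ∧ t ≤ (2:ℝ)⁻¹ ^ i := by
    intro I t ht htI
    have hex : ∃ n, (2:ℝ)⁻¹ ^ (n + 1) < t := by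
      obtain ⟨n, hn⟩ := exists_pow_lt_of_lt_one ht (by norm_num : (2:ℝ)⁻¹ < 1)
      exact ⟨n, lt_of_le_of_lt
        (pow_le_pow_of_le_one (by norm_num) (by norm_num) (Nat.le_succ n)) hn⟩
    have hi1 : (2:ℝ)⁻¹ ^ (Nat.find hex + 1) < t := Nat.find_spec hex
    set i := Nat.find hex with hidef
    have hi2 : t ≤ (2:ℝ)⁻¹ ^ i := by
      rcases Nat.eq_zero_or_pos i with h0 | h0
      · rw [h0, pow_zero]
        have : (2:ℝ)⁻¹ ^ I ≤ 1 := pow_le_one₀ (by norm_num) (by norm_num)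
        linarith
      · have hmin := Nat.find_min hex (m := i - 1) (by omega)
        push_neg at hmin
        have : i - 1 + 1 = i := by omega
        rwa [this] at hmin
    have hIi : I ≤ i := by
      by_contra h
      push_neg at h
      have : (2:ℝ)⁻¹ ^ I ≤ (2:ℝ)⁻¹ ^ (i + 1) :=
        pow_le_pow_of_le_one (by norm_num) (by norm_num) (by omega)
      linarith
    exact ⟨i, hIi, hi1, hi2⟩
  -- Local representation
  have hloc : ∀ (i : ℕ) (t : ℝ), (2:ℝ)⁻¹ ^ (i + 1) < t →
      g t = (∑ m ∈ Finset.range (i + 1), u m t) + γ (i + 1) := by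
    intro i t ht
    have h0 : ∀ m : ℕ, u (m + (i + 1)) t = ε (m + (i + 1)) := by
      intro m
      have hp : (0:ℝ) < 2 ^ (i + 1) := by positivity
      have ht' : 1 < 2 ^ (i + 1) * t := by
        have := mul_lt_mul_of_pos_left ht hp
        rwa [inv_pow, mul_inv_cancel₀ (ne_of_gt hp)] at this
      have hsplit : (2:ℝ) ^ (m + (i + 1) + 1) = 2 ^ (m + 1) * 2 ^ (i + 1) := by
        rw [← pow_add]; congr 1; omega
      have h2m : (2:ℝ) ≤ 2 ^ (m + 1) := by
        calc (2:ℝ) = 2 ^ 1 := (pow_one 2).symm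
          _ ≤ 2 ^ (m + 1) := pow_le_pow_right₀ (by norm_num) (by omega)
      have harg : (1:ℝ) ≤ 2 ^ (m + (i + 1) + 1) * t - 1 := by
        rw [hsplit]
        nlinarith
      show ε (m + (i + 1)) * Real.smoothTransition (2 ^ (m + (i + 1) + 1) * t - 1)
          = ε (m + (i + 1))
      rw [Real.smoothTransition.one_of_one_le harg, mul_one]
    have h1 := Summable.sum_add_tsum_nat_add (i + 1) (hus t)
    have h2 : ∑' m, u (m + (i + 1)) t = γ (i + 1) := tsum_congr h0
    show (∑' m, u m t) = _
    rw [← h1, h2]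
  -- Smoothness of local models
  have hGsmooth : ∀ i : ℕ, ContDiff ℝ (⊤:ℕ∞)
      (fun t => (∑ m ∈ Finset.range (i + 1), u m t) + γ (i + 1)) := fun i =>
    (ContDiff.sum fun m _ => huc ⊤ m).add contDiff_const
  -- find a band index for any positive t
  have hsome : ∀ t : ℝ, 0 < t → ∃ i : ℕ, (2:ℝ)⁻¹ ^ (i + 1) < t := by
    intro t ht
    obtain ⟨n, hn⟩ := exists_pow_lt_of_lt_one ht (by norm_num : (2:ℝ)⁻¹ < 1)
    exact ⟨n, lt_of_le_of_lt
      (pow_le_pow_of_le_one (by norm_num) (by norm_num) (Nat.le_succ n)) hn⟩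
  have hgsm : ContDiffOn ℝ (⊤:ℕ∞) g (Ioi 0) := by
    intro t ht
    obtain ⟨i, hi⟩ := hsome t ht
    have hev : g =ᶠ[𝓝 t] (fun s => (∑ m ∈ Finset.range (i + 1), u m s) + γ (i + 1)) := by
      filter_upwards [Ioi_mem_nhds hi] with s hs using hloc i s hs
    exact (((hGsmooth i).contDiffAt).congr_of_eventuallyEq hev).contDiffWithinAt
  have hgpos : ∀ t, 0 < t → 0 < g t := by
    intro t ht
    obtain ⟨i, hi⟩ := hsome t ht
    rw [hloc i t hi]
    have h0 : 0 ≤ ∑ m ∈ Finset.range (i + 1), u m t :=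
      Finset.sum_nonneg fun m _ => hu0 m t
    linarith [hγpos (i + 1)]
  -- Collapse of the derivative sum on a band
  have hsingle : ∀ (j i : ℕ) (t : ℝ), t ≤ (2:ℝ)⁻¹ ^ i →
      ∑ m ∈ Finset.range (i + 1), iteratedDeriv j (u m) t = iteratedDeriv j (u i) t := by
    intro j i t hti
    refine Finset.sum_eq_single_of_mem i (Finset.self_mem_range_succ i) ?_
    intro m hm hne
    have hm' : m + 1 ≤ i := by
      have := Finset.mem_range.1 hm; omega
    have harg : (2:ℝ) ^ (m + 1) * t - 1 ≤ 0 := by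
      have h1 : (2:ℝ) ^ (m + 1) * t ≤ 2 ^ (m + 1) * (2:ℝ)⁻¹ ^ i :=
        mul_le_mul_of_nonneg_left hti (by positivity)
      have hle : (2:ℝ) ^ (m + 1) ≤ 2 ^ i := pow_le_pow_right₀ (by norm_num) hm'
      have hpi : (0:ℝ) < 2 ^ i := by positivity
      have h2 : (2:ℝ) ^ (m + 1) * (2:ℝ)⁻¹ ^ i ≤ 1 := by
        rw [inv_pow]
        calc (2:ℝ) ^ (m + 1) * ((2:ℝ) ^ i)⁻¹ ≤ 2 ^ i * ((2:ℝ) ^ i)⁻¹ :=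
              mul_le_mul_of_nonneg_right hle (by positivity)
          _ = 1 := mul_inv_cancel₀ (ne_of_gt hpi)
      linarith
    show iteratedDeriv j (fun s => ε m * Real.smoothTransition (2 ^ (m + 1) * s - 1)) t = 0
    rw [deriv_term j (ε m) (2 ^ (m + 1)) t, chi_left j harg, mul_zero, mul_zero]
  -- iteratedDerivWithin = iteratedDeriv on Ioi 0
  have hW : ∀ (j : ℕ) (t : ℝ), 0 < t →
      iteratedDerivWithin j g (Ioi 0) t = iteratedDeriv j g t := by
    intro j t ht
    simp [iteratedDerivWithin_eq_iteratedFDerivWithin, iteratedDeriv_eq_iteratedFDeriv,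
      iteratedFDerivWithin_of_isOpen j isOpen_Ioi (mem_Ioi.2 ht)]
  -- Derivative formula on a band, j ≠ 0
  have hjcomp : ∀ (j i : ℕ) (t : ℝ), j ≠ 0 → 0 < t → (2:ℝ)⁻¹ ^ (i + 1) < t →
      t ≤ (2:ℝ)⁻¹ ^ i →
      iteratedDerivWithin j g (Ioi 0) t
        = ε i * (((2:ℝ) ^ (i + 1)) ^ j
            * iteratedDeriv j Real.smoothTransition (2 ^ (i + 1) * t - 1)) := by
    intro j i t hj ht hta htb
    have hev : g =ᶠ[𝓝 t] (fun s => (∑ m ∈ Finset.range (i + 1), u m s) + γ (i + 1)) := by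
      filter_upwards [Ioi_mem_nhds hta] with s hs using hloc i s hs
    rw [hW j t ht, hev.iteratedDeriv_eq]
    have hc : iteratedDeriv j (fun s => (∑ m ∈ Finset.range (i + 1), u m s) + γ (i + 1)) t
        = iteratedDeriv j (fun s => ∑ m ∈ Finset.range (i + 1), u m s) t := by
      rw [show (fun s => (∑ m ∈ Finset.range (i + 1), u m s) + γ (i + 1))
          = (fun s => γ (i + 1) + ∑ m ∈ Finset.range (i + 1), u m s)
        from funext fun s => add_comm _ _]
      rw [← iteratedDerivWithin_univ, ← iteratedDerivWithin_univ]
      exact iteratedDerivWithin_const_add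
        (Nat.pos_of_ne_zero hj) _
    rw [hc, iteratedDeriv_fsum (fun m _ => huc' j m) t, hsingle j i t htb]
    exact deriv_term j (ε i) (2 ^ (i + 1)) t
  -- findGreatest properties
  have hNlarge : ∀ n₀ : ℕ, ∃ I : ℕ, ∀ i, I ≤ i → n₀ ≤ N i ∧ (2:ℝ)⁻¹ ^ i < D (N i) := by
    intro n₀
    have hto : Tendsto (fun i : ℕ => (2:ℝ)⁻¹ ^ i) atTop (𝓝 0) :=
      tendsto_pow_atTop_nhds_zero_of_lt_one (by norm_num) (by norm_num)
    have hev : ∀ᶠ i in atTop, (2:ℝ)⁻¹ ^ i < D n₀ := hto.eventually_lt_const (hDpos n₀)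
    obtain ⟨I₁, hI₁⟩ := eventually_atTop.1 hev
    refine ⟨max I₁ n₀, fun i hi => ?_⟩
    have hP : (2:ℝ)⁻¹ ^ i < D n₀ := hI₁ i (le_trans (le_max_left _ _) hi)
    have hn0i : n₀ ≤ i := le_trans (le_max_right _ _) hi
    have hspec := Nat.findGreatest_spec (P := fun n => (2:ℝ)⁻¹ ^ i < D n) hn0i hP
    exact ⟨Nat.le_findGreatest hn0i hP, hspec⟩
  refine ⟨g, hgsm, hgpos, ?_, ?_⟩
  · -- flatness
    intro j
    rcases eq_or_ne j 0 with rfl | hj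
    · rw [Metric.tendsto_nhdsWithin_nhds]
      intro ε' hε'
      obtain ⟨M, hM⟩ := exists_pow_lt_of_lt_one (show (0:ℝ) < ε'/2 by linarith)
        (by norm_num : (2:ℝ)⁻¹ < 1)
      refine ⟨(2:ℝ)⁻¹ ^ M, by positivity, ?_⟩
      intro t htmem htd
      have ht : 0 < t := htmem
      have htM : t < (2:ℝ)⁻¹ ^ M := by rwa [Real.dist_eq, sub_zero, abs_of_pos ht] at htd
      obtain ⟨i, hIi, hta, htb⟩ := hband M t ht htM
      rw [Real.dist_eq, sub_zero]
      have h0 : iteratedDerivWithin 0 g (Ioi 0) t = g t := by simp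
      rw [h0, abs_of_pos (hgpos t ht)]
      have hS : ∑ m ∈ Finset.range (i + 1), u m t = u i t := by
        have := hsingle 0 i t htb
        simpa [iteratedDeriv_zero] using this
      have hhalf : (2:ℝ)⁻¹ ^ (i + 1) * 2 = (2:ℝ)⁻¹ ^ i := by
        rw [pow_succ]; ring
      have hpm : (2:ℝ)⁻¹ ^ i ≤ (2:ℝ)⁻¹ ^ M :=
        pow_le_pow_of_le_one (by norm_num) (by norm_num) hIi
      calc g t = u i t + γ (i + 1) := by rw [hloc i t hta, hS]
        _ ≤ ε i + (2:ℝ)⁻¹ ^ (i + 1) * 2 := add_le_add (hule i t) (hγle (i + 1))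
        _ ≤ (2:ℝ)⁻¹ ^ i + (2:ℝ)⁻¹ ^ i := by rw [hhalf]; exact add_le_add_left (hεle i) _
        _ ≤ (2:ℝ)⁻¹ ^ M + (2:ℝ)⁻¹ ^ M := add_le_add hpm hpm
        _ < ε' := by linarith
    · obtain ⟨K, hK, hKb⟩ := chi_bound j
      rw [Metric.tendsto_nhdsWithin_nhds]
      intro ε' hε'
      obtain ⟨I₀, hI₀⟩ := hNlarge (j + 3)
      obtain ⟨M, hM⟩ := exists_pow_lt_of_lt_one (div_pos hε' hK) (by norm_num : (2:ℝ)⁻¹ < 1)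
      set I := max (max (I₀ + 1) (2 * j + 1)) M with hIdef
      have hI1 : I₀ + 1 ≤ I := le_trans (le_max_left _ _) (le_max_left _ _)
      have h2j : 2 * j + 1 ≤ I := le_trans (le_max_right _ _) (le_max_left _ _)
      have hMle : M ≤ I := le_max_right _ _
      refine ⟨(2:ℝ)⁻¹ ^ I, by positivity, ?_⟩
      intro t htmem htd
      have ht : 0 < t := htmem
      have htI : t < (2:ℝ)⁻¹ ^ I := by rwa [Real.dist_eq, sub_zero, abs_of_pos ht] at htd
      obtain ⟨i, hIi, hta, htb⟩ := hband I t ht htI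
      rw [Real.dist_eq, sub_zero, hjcomp j i t hj ht hta htb]
      have hNi : j + 3 ≤ N (i - 1) := (hI₀ (i - 1) (by omega)).1
      have hiE : (i + 1) * j + i ≤ E i := by
        have h1 : j + 1 ≤ N (i - 1) - 2 := by omega
        have h2 : (i - 1) * (j + 1) ≤ (i - 1) * (N (i - 1) - 2) := Nat.mul_le_mul_left _ h1
        have h3 : (i + 1) * j ≤ (i - 1) * (j + 1) := by
          have hi2j : 2 * j + 1 ≤ i := le_trans h2j hIi
          obtain ⟨a, ha⟩ := Nat.exists_eq_add_of_le hi2j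
          subst ha
          have hsub : 2 * j + 1 + a - 1 = 2 * j + a := by omega
          rw [hsub]
          nlinarith
        show (i + 1) * j + i ≤ i + (i - 1) * (N (i - 1) - 2)
        omega
      have hb2 : ε i * ((2:ℝ) ^ (i + 1)) ^ j ≤ (2:ℝ)⁻¹ ^ i := by
        have e1 : ((2:ℝ) ^ (i + 1)) ^ j = 2 ^ ((i + 1) * j) := by rw [← pow_mul]
        have e2 : ε i ≤ (2:ℝ)⁻¹ ^ ((i + 1) * j + i) :=
          pow_le_pow_of_le_one (by norm_num) (by norm_num) hiE
        have e3 : (2:ℝ)⁻¹ ^ ((i + 1) * j) * 2 ^ ((i + 1) * j) = 1 := by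
          rw [← mul_pow]; norm_num
        calc ε i * ((2:ℝ) ^ (i + 1)) ^ j
            ≤ (2:ℝ)⁻¹ ^ ((i + 1) * j + i) * 2 ^ ((i + 1) * j) := by
              rw [e1]; exact mul_le_mul_of_nonneg_right e2 (by positivity)
          _ = (2:ℝ)⁻¹ ^ i := by
              rw [pow_add, mul_right_comm, e3, one_mul]
      have hb3 : (2:ℝ)⁻¹ ^ i ≤ (2:ℝ)⁻¹ ^ M :=
        pow_le_pow_of_le_one (by norm_num) (by norm_num) (le_trans hMle hIi)
      calc |ε i * (((2:ℝ) ^ (i + 1)) ^ j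
              * iteratedDeriv j Real.smoothTransition (2 ^ (i + 1) * t - 1))|
          = ε i * ((2:ℝ) ^ (i + 1)) ^ j
              * |iteratedDeriv j Real.smoothTransition (2 ^ (i + 1) * t - 1)| := by
            rw [← mul_assoc, abs_mul, abs_of_pos (by positivity)]
        _ ≤ ε i * ((2:ℝ) ^ (i + 1)) ^ j * K :=
            mul_le_mul_of_nonneg_left (hKb _) (by positivity)
        _ ≤ (2:ℝ)⁻¹ ^ i * K := mul_le_mul_of_nonneg_right hb2 hK.le
        _ ≤ (2:ℝ)⁻¹ ^ M * K := mul_le_mul_of_nonneg_right hb3 hK.le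
        _ < (ε' / K) * K := mul_lt_mul_of_pos_right hM hK
        _ = ε' := div_mul_cancel₀ _ (ne_of_gt hK)
  · -- domination
    intro k
    rw [Metric.tendsto_nhdsWithin_nhds]
    intro ε' hε'
    obtain ⟨I₀, hI₀⟩ := hNlarge (max k 2)
    obtain ⟨M, hM⟩ := exists_pow_lt_of_lt_one hε' (by norm_num : (2:ℝ)⁻¹ < 1)
    set I := max I₀ (M + 1) with hIdef
    have hII0 : I₀ ≤ I := le_max_left _ _
    have hIM : M + 1 ≤ I := le_max_right _ _
    refine ⟨(2:ℝ)⁻¹ ^ I, by positivity, ?_⟩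
    intro t htmem htd
    have ht : 0 < t := htmem
    have htI : t < (2:ℝ)⁻¹ ^ I := by rwa [Real.dist_eq, sub_zero, abs_of_pos ht] at htd
    obtain ⟨i, hIi, hta, htb⟩ := hband I t ht htI
    obtain ⟨hk2, hD'⟩ := hI₀ i (le_trans hII0 hIi)
    have hkN : k ≤ N i := le_trans (le_max_left _ _) hk2
    have hN2 : 2 ≤ N i := le_trans (le_max_right _ _) hk2
    have hfb : |f k t| ≤ t ^ N i := hDbound (N i) t ht (lt_of_le_of_lt htb hD') k hkN
    have hg1 : ε (i + 1) ≤ g t := by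
      refine le_trans (hεγ (i + 1)) ?_
      rw [hloc i t hta]
      have h0 : 0 ≤ ∑ m ∈ Finset.range (i + 1), u m t :=
        Finset.sum_nonneg fun m _ => hu0 m t
      linarith
    have hi1 : 1 ≤ i := le_trans (by omega) hIi
    have hEnat : i * N i = E (i + 1) + (i - 1) := by
      show i * N i = (i + 1) + (i + 1 - 1) * (N (i + 1 - 1) - 2) + (i - 1)
      have hii : i + 1 - 1 = i := by omega
      rw [hii]
      obtain ⟨m, hm⟩ : ∃ m, N i = m + 2 := ⟨N i - 2, by omega⟩
      rw [hm]
      have h1 : i * (m + 2) = i * m + i * 2 := by ring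
      have h2 : m + 2 - 2 = m := by omega
      rw [h2, h1]
      omega
    rw [Real.dist_eq, sub_zero, abs_div, abs_of_pos (hgpos t ht)]
    have hstep1 : |f k t| / g t ≤ t ^ N i / ε (i + 1) :=
      div_le_div₀ (pow_nonneg ht.le _) hfb (hεpos _) hg1
    have hstep2 : t ^ N i / ε (i + 1) ≤ ((2:ℝ)⁻¹ ^ i) ^ N i / ε (i + 1) :=
      (div_le_div_iff_of_pos_right (hεpos _)).2 (pow_le_pow_left₀ ht.le htb _)
    have hstep3 : ((2:ℝ)⁻¹ ^ i) ^ N i / ε (i + 1) = (2:ℝ)⁻¹ ^ (i - 1) := by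
      rw [← pow_mul, hEnat, pow_add]
      show (2:ℝ)⁻¹ ^ E (i + 1) * (2:ℝ)⁻¹ ^ (i - 1) / (2:ℝ)⁻¹ ^ E (i + 1) = _
      rw [mul_comm, mul_div_assoc, div_self (ne_of_gt (pow_pos (by norm_num) _)), mul_one]
    have hstep4 : (2:ℝ)⁻¹ ^ (i - 1) ≤ (2:ℝ)⁻¹ ^ M :=
      pow_le_pow_of_le_one (by norm_num) (by norm_num) (by omega)
    calc |f k t| / g t ≤ t ^ N i / ε (i + 1) := hstep1
      _ ≤ ((2:ℝ)⁻¹ ^ i) ^ N i / ε (i + 1) := hstep2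
      _ = (2:ℝ)⁻¹ ^ (i - 1) := hstep3
      _ ≤ (2:ℝ)⁻¹ ^ M := hstep4
      _ < ε' := hM
end

section
/- Let Z ⊆ ℝ^d be a nonempty closed set, W = ℝ^d \ Z, and let δ(x) denote the distance from x to Z. Then there exists a smooth function Δ : W → ℝ with Δ(x) > 0 for all x ∈ W, constants c_2 > c_1 > 0, and for each k ∈ ℕ a constant B_k ≥ 0, such that c_1 δ(x) ≤ Δ(x) ≤ c_2 δ(x) for all x ∈ W, and ‖D^k Δ(x)‖ ≤ B_k δ(x)^{1−k} for all x ∈ W and all k ∈ ℕ, where D^k denotes the k-th iterated Fréchet derivative. -/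
open MeasureTheory Metric Set Function
open scoped Topology

namespace Stein

/-- antitonicity of `zpow` for nonpositive exponents -/
lemma zpow_anti {a b : ℝ} (ha : 0 < a) (hab : a ≤ b) {e : ℤ} (he : e ≤ 0) :
    b ^ e ≤ a ^ e := by
  obtain ⟨n, rfl⟩ : ∃ n : ℕ, e = -(n : ℤ) := ⟨e.natAbs, by omega⟩
  rw [zpow_neg, zpow_neg, zpow_natCast, zpow_natCast]
  exact inv_anti₀ (pow_pos ha n) (pow_le_pow_left₀ ha.le hab n)

variable (d : ℕ)

/-- the bump function -/
noncomputable def bump : ContDiffBump (0 : Fin d → ℝ) := ⟨1/3, 1/2, by norm_num, by norm_num⟩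

noncomputable def phi : (Fin d → ℝ) → ℝ := bump d

lemma phi_contDiff : ContDiff ℝ ((⊤:ℕ∞)) (phi d) := (bump d).contDiff

lemma phi_nonneg (z : Fin d → ℝ) : 0 ≤ phi d z := (bump d).nonneg

lemma phi_le_one (z : Fin d → ℝ) : phi d z ≤ 1 := (bump d).le_one

lemma phi_one {z : Fin d → ℝ} (hz : ‖z‖ ≤ 1/3) : phi d z = 1 :=
  (bump d).one_of_mem_closedBall (by simpa [bump, mem_closedBall, dist_zero_right] using hz)

lemma phi_tsupport : tsupport (phi d) ⊆ closedBall 0 (1/2) := by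
  rw [phi, (bump d).tsupport_eq]
  exact closedBall_subset_closedBall (by norm_num [bump])

lemma phi_compactSupport : HasCompactSupport (phi d) := (bump d).hasCompactSupport

/-- global bounds for iterated derivatives of `phi` -/
lemma phi_deriv_bound (k : ℕ) : ∃ C : ℝ, 0 ≤ C ∧ ∀ z, ‖iteratedFDeriv ℝ k (phi d) z‖ ≤ C := by
  obtain ⟨C, hC⟩ := (((phi_contDiff d).continuous_iteratedFDeriv
    (by exact_mod_cast le_top (α := ℕ∞)) (m := k))).bounded_above_of_compact_support
    ((phi_compactSupport d).iteratedFDeriv k)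
  exact ⟨max C 0, le_max_right _ _, fun z => (hC z).trans (le_max_left _ _)⟩

variable (Z : Set (Fin d → ℝ))

/-- exponent -/
def ee (k : ℕ) : ℤ := 1 - d - k

/-- the integrand for the `k`-th derivative -/
noncomputable def G (k : ℕ) (x y : Fin d → ℝ) : (Fin d → ℝ) [×k]→L[ℝ] ℝ :=
  (infDist y Z ^ ee d k) • iteratedFDeriv ℝ k (phi d) ((infDist y Z)⁻¹ • (x - y))

/-- the formal Taylor series of the regularized distance -/
noncomputable def P (x : Fin d → ℝ) : FormalMultilinearSeries ℝ (Fin d → ℝ) ℝ :=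
  fun k => ∫ y in Zᶜ, G d Z k x y

/-- the regularized distance -/
noncomputable def Delta (x : Fin d → ℝ) : ℝ :=
  ∫ y in Zᶜ, (infDist y Z ^ (1 - (d:ℤ))) * phi d ((infDist y Z)⁻¹ • (x - y))

variable {d Z}
variable (hd : 0 < d) (hZ : IsClosed Z) (hZne : Z.Nonempty)

/-- `P x 0` is `Delta x` -/
lemma P_zero (x : Fin d → ℝ) :
    P d Z x 0 = (continuousMultilinearCurryFin0 ℝ (Fin d → ℝ) ℝ).symm (Delta d Z x) := by
  have h1 : ∀ y : Fin d → ℝ, G d Z 0 x y =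
      (continuousMultilinearCurryFin0 ℝ (Fin d → ℝ) ℝ).symm
        ((infDist y Z ^ (1 - (d:ℤ))) * phi d ((infDist y Z)⁻¹ • (x - y))) := by
    intro y
    rw [G, iteratedFDeriv_zero_eq_comp, show ee d 0 = 1 - (d:ℤ) from by simp [ee]]
    show _ • (continuousMultilinearCurryFin0 ℝ (Fin d → ℝ) ℝ).symm _ = _
    rw [← _root_.map_smul, smul_eq_mul]
  show ∫ y in Zᶜ, G d Z 0 x y = _
  simp only [h1]
  have hcomm := ((continuousMultilinearCurryFin0 ℝ (Fin d → ℝ) ℝ).symm.toLinearIsometry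
    ).integral_comp_comm (μ := volume.restrict Zᶜ)
    (fun y => (infDist y Z ^ (1 - (d:ℤ))) * phi d ((infDist y Z)⁻¹ • (x - y)))
  simp only [LinearIsometryEquiv.coe_toLinearIsometry] at hcomm
  rw [hcomm]
  rfl


section Facts
include hZ hZne

lemma rpos {y : Fin d → ℝ} (hy : y ∈ Zᶜ) : 0 < infDist y Z :=
  (hZ.notMem_iff_infDist_pos hZne).1 hy

end Facts

lemma rlip (x y : Fin d → ℝ) : |infDist x Z - infDist y Z| ≤ ‖x - y‖ := by
  have := (lipschitz_infDist_pt Z).dist_le_mul x y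
  rw [Real.dist_eq, dist_eq_norm] at this
  simpa using this

/-- vanishing of the integrand away from the natural ball -/
lemma G_eq_zero {k : ℕ} {x y : Fin d → ℝ} (hy : 0 < infDist y Z)
    (h : infDist y Z / 2 < ‖x - y‖) : G d Z k x y = 0 := by
  have hu : (infDist y Z)⁻¹ • (x - y) ∉ tsupport (phi d) := by
    intro hm
    have h2 : ‖(infDist y Z)⁻¹ • (x - y)‖ ≤ 1/2 := by
      simpa [mem_closedBall, dist_zero_right] using phi_tsupport d hm
    rw [norm_smul, Real.norm_eq_abs, abs_of_nonneg (inv_nonneg.2 hy.le)] at h2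
    have := (inv_mul_le_iff₀ hy).1 h2
    rw [mul_comm] at this
    linarith
  have : iteratedFDeriv ℝ k (phi d) ((infDist y Z)⁻¹ • (x - y)) = 0 :=
    image_eq_zero_of_notMem_tsupport fun hm => hu (tsupport_iteratedFDeriv_subset k hm)
  simp [G, this]

/-- basic geometry of the support -/
lemma geom (hZ : IsClosed Z) (hZne : Z.Nonempty) {x y : Fin d → ℝ} (hy : y ∈ Zᶜ)
    (h : ‖x - y‖ ≤ infDist y Z / 2) :
    (2/3) * infDist x Z ≤ infDist y Z ∧ infDist y Z ≤ 2 * infDist x Z ∧ ‖x - y‖ ≤ infDist x Z := by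
  have h1 := abs_le.1 (rlip (Z := Z) x y)
  have hy' := rpos hZ hZne hy
  constructor
  · linarith [h1.1]
  constructor
  · linarith [h1.2]
  · linarith [h1.2]

lemma ee_nonpos (hd : 0 < d) (k : ℕ) : ee d k ≤ 0 := by
  simp only [ee]; omega

/-- the fundamental uniform bound for the integrand -/
lemma G_bound (hd : 0 < d) (hZ : IsClosed Z) (hZne : Z.Nonempty) (k : ℕ) {C : ℝ} (hC0 : 0 ≤ C)
    (hC : ∀ z, ‖iteratedFDeriv ℝ k (phi d) z‖ ≤ C)
    {x₀ : Fin d → ℝ} (hx₀ : x₀ ∈ Zᶜ) {x : Fin d → ℝ} (hx : ‖x - x₀‖ ≤ infDist x₀ Z / 4)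
    {y : Fin d → ℝ} (hy : y ∈ Zᶜ) :
    ‖G d Z k x y‖ ≤ (closedBall x₀ (2 * infDist x₀ Z)).indicator
      (fun _ => C * ((1/2) * infDist x₀ Z) ^ ee d k) y := by
  have hx₀' : 0 < infDist x₀ Z := rpos hZ hZne hx₀
  have hry : 0 < infDist y Z := rpos hZ hZne hy
  have h1 := abs_le.1 (rlip (Z := Z) x x₀)
  by_cases hcase : infDist y Z / 2 < ‖x - y‖
  · rw [G_eq_zero hry hcase, norm_zero]
    apply Set.indicator_nonneg
    intro a _
    exact mul_nonneg hC0 (zpow_nonneg (by positivity) _)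
  · push_neg at hcase
    obtain ⟨hg1, hg2, hg3⟩ := geom hZ hZne hy hcase
    have hmem : y ∈ closedBall x₀ (2 * infDist x₀ Z) := by
      rw [mem_closedBall, dist_eq_norm]
      calc ‖y - x₀‖ ≤ ‖y - x‖ + ‖x - x₀‖ := by
            simpa using norm_add_le (y - x) (x - x₀)
        _ = ‖x - y‖ + ‖x - x₀‖ := by rw [norm_sub_rev]
        _ ≤ 2 * infDist x₀ Z := by linarith [h1.1, h1.2]
    rw [Set.indicator_of_mem hmem]
    have hsm : infDist y Z ^ ee d k ≤ ((1/2) * infDist x₀ Z) ^ ee d k := by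
      apply zpow_anti (by positivity) ?_ (ee_nonpos hd k)
      linarith [h1.1, h1.2]
    calc ‖G d Z k x y‖ = |infDist y Z ^ ee d k| *
          ‖iteratedFDeriv ℝ k (phi d) ((infDist y Z)⁻¹ • (x - y))‖ := by
            rw [G]
            have := norm_smul (infDist y Z ^ ee d k)
              (iteratedFDeriv ℝ k (phi d) ((infDist y Z)⁻¹ • (x - y)))
            rwa [Real.norm_eq_abs] at this
      _ ≤ ((1/2) * infDist x₀ Z) ^ ee d k * C := by
            rw [abs_of_nonneg (zpow_nonneg hry.le _)]
            exact mul_le_mul hsm (hC _) (norm_nonneg _) (zpow_nonneg (by positivity) _)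
      _ = C * ((1/2) * infDist x₀ Z) ^ ee d k := mul_comm _ _

/-- a.e. strong measurability of the integrand -/
lemma G_meas (hZ : IsClosed Z) (hZne : Z.Nonempty) (k : ℕ) (x : Fin d → ℝ) :
    AEStronglyMeasurable (G d Z k x) (volume.restrict Zᶜ) := by
  have h1 : ContinuousOn (fun y => infDist y Z) Zᶜ := (continuous_infDist_pt Z).continuousOn
  have h2 : ContinuousOn (fun y : Fin d → ℝ => infDist y Z ^ ee d k) Zᶜ :=
    h1.zpow₀ _ (fun y hy => Or.inl (rpos hZ hZne hy).ne')
  have h3 : ContinuousOn (fun y : Fin d → ℝ => (infDist y Z)⁻¹ • (x - y)) Zᶜ :=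
    (h1.inv₀ (fun y hy => (rpos hZ hZne hy).ne')).smul
      ((continuous_const.sub continuous_id).continuousOn)
  have h4 : Continuous (iteratedFDeriv ℝ k (phi d)) :=
    (phi_contDiff d).continuous_iteratedFDeriv (by exact_mod_cast le_top (α := ℕ∞))
  exact (h2.smul (h4.comp_continuousOn h3)).aestronglyMeasurable_of_isSeparable hZ.isOpen_compl.measurableSet
    (TopologicalSpace.IsSeparable.of_separableSpace _)

lemma bound_integrable (x₀ : Fin d → ℝ) (R c : ℝ) :
    Integrable ((closedBall x₀ R).indicator (fun _ => c)) (volume.restrict Zᶜ) := by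
  refine (MeasureTheory.Integrable.restrict ?_)
  rw [integrable_indicator_iff measurableSet_closedBall]
  exact integrableOn_const measure_closedBall_lt_top.ne

/-- integrability of the integrand -/
lemma G_int (hd : 0 < d) (hZ : IsClosed Z) (hZne : Z.Nonempty) (k : ℕ) {x : Fin d → ℝ}
    (hx : x ∈ Zᶜ) : Integrable (G d Z k x) (volume.restrict Zᶜ) := by
  obtain ⟨C, hC0, hC⟩ := phi_deriv_bound d k
  refine (bound_integrable x (2 * infDist x Z) (C * ((1/2) * infDist x Z) ^ ee d k)).mono'
    (G_meas hZ hZne k x) ?_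
  refine (ae_restrict_iff' hZ.measurableSet.compl).2 (ae_of_all _ fun y hy => ?_)
  exact G_bound hd hZ hZne k hC0 hC hx (by simp only [sub_self, norm_zero]; exact div_nonneg Metric.infDist_nonneg (by norm_num)) hy

/-- pointwise differentiability of the integrand in the parameter -/
lemma G_hasFDerivAt (hZ : IsClosed Z) (hZne : Z.Nonempty) (k : ℕ) {y : Fin d → ℝ}
    (hy : y ∈ Zᶜ) (x : Fin d → ℝ) :
    HasFDerivAt (fun x => G d Z k x y) (G d Z (k+1) x y).curryLeft x := by
  have hry := rpos hZ hZne hy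
  have hQ : HasFDerivAt (iteratedFDeriv ℝ k (phi d))
      ((iteratedFDeriv ℝ (k+1) (phi d) ((infDist y Z)⁻¹ • (x - y))).curryLeft)
      ((infDist y Z)⁻¹ • (x - y)) := by
    have h1 : DifferentiableAt ℝ (iteratedFDeriv ℝ k (phi d)) ((infDist y Z)⁻¹ • (x - y)) :=
      ((phi_contDiff d).differentiable_iteratedFDeriv
        (by exact_mod_cast WithTop.coe_lt_top k)).differentiableAt
    have h2 := h1.hasFDerivAt
    rwa [fderiv_iteratedFDeriv] at h2
  have hA : HasFDerivAt (fun x : Fin d → ℝ => (infDist y Z)⁻¹ • (x - y))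
      ((infDist y Z)⁻¹ • ContinuousLinearMap.id ℝ (Fin d → ℝ)) x :=
    by have h := ((hasFDerivAt_id (𝕜 := ℝ) x).sub_const y).const_smul (infDist y Z)⁻¹; exact h
  have hB : HasFDerivAt (fun x => G d Z k x y) ((infDist y Z ^ ee d k) •
      ((iteratedFDeriv ℝ (k+1) (phi d) ((infDist y Z)⁻¹ • (x - y))).curryLeft.comp
        ((infDist y Z)⁻¹ • ContinuousLinearMap.id ℝ (Fin d → ℝ)))) x := by
    have h := (hQ.comp x hA).const_smul (infDist y Z ^ ee d k); exact h
  refine HasFDerivAt.congr_fderiv hB ?_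
  symm
  ext v m
  simp only [ContinuousMultilinearMap.curryLeft_apply,
    ContinuousLinearMap.coe_smul', Pi.smul_apply, ContinuousLinearMap.coe_comp',
    Function.comp_apply, ContinuousLinearMap.smul_apply, ContinuousLinearMap.coe_id', id_eq,
    ContinuousMultilinearMap.smul_apply, G, smul_eq_mul]
  have hcons : Fin.cons ((infDist y Z)⁻¹ • v) m =
      Function.update (Fin.cons v m : Fin (k+1) → (Fin d → ℝ)) 0 ((infDist y Z)⁻¹ • v) := by
    rw [Fin.update_cons_zero]
  rw [hcons, (iteratedFDeriv ℝ (k+1) (phi d) _).map_update_smul, Fin.update_cons_zero]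
  rw [smul_eq_mul, ← mul_assoc]
  congr 1
  rw [show ee d (k+1) = ee d k - 1 from by simp [ee]; ring, zpow_sub_one₀ hry.ne']

/-- differentiation under the integral sign -/
lemma P_deriv (hd : 0 < d) (hZ : IsClosed Z) (hZne : Z.Nonempty) (k : ℕ) {x₀ : Fin d → ℝ}
    (hx₀ : x₀ ∈ Zᶜ) :
    HasFDerivAt (fun x => P d Z x k) (P d Z x₀ (k+1)).curryLeft x₀ := by
  obtain ⟨C, hC0, hC⟩ := phi_deriv_bound d (k+1)
  have hrx₀ := rpos hZ hZne hx₀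
  have hε : 0 < infDist x₀ Z / 4 := by positivity
  have key : HasFDerivAt (fun x => ∫ y in Zᶜ, G d Z k x y)
      (∫ y in Zᶜ, (G d Z (k+1) x₀ y).curryLeft) x₀ := by
    apply hasFDerivAt_integral_of_dominated_of_fderiv_le
      (F' := fun x y => (G d Z (k+1) x y).curryLeft)
      (bound := (closedBall x₀ (2 * infDist x₀ Z)).indicator
        (fun _ => C * ((1/2) * infDist x₀ Z) ^ ee d (k+1))) (ball_mem_nhds x₀ hε)
    · exact Filter.Eventually.of_forall fun x => G_meas hZ hZne k x
    · exact G_int hd hZ hZne k hx₀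
    · have hmeas := G_meas hZ hZne (k+1) x₀
      exact ((continuousMultilinearCurryLeftEquiv ℝ
        (fun _ : Fin (k+1) => (Fin d → ℝ)) ℝ).continuous.comp_aestronglyMeasurable hmeas)
    · refine (ae_restrict_iff' hZ.isOpen_compl.measurableSet).2 (ae_of_all _ fun y hy => ?_)
      intro x hxball
      have hnorm : ‖(G d Z (k+1) x y).curryLeft‖ = ‖G d Z (k+1) x y‖ :=
        (continuousMultilinearCurryLeftEquiv ℝ
          (fun _ : Fin (k+1) => (Fin d → ℝ)) ℝ).norm_map _
      rw [hnorm]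
      refine G_bound hd hZ hZne (k+1) hC0 hC hx₀ ?_ hy
      rw [mem_ball, dist_eq_norm] at hxball
      exact hxball.le
    · exact bound_integrable x₀ _ _
    · refine (ae_restrict_iff' hZ.isOpen_compl.measurableSet).2 (ae_of_all _ fun y hy => ?_)
      intro x _
      exact G_hasFDerivAt hZ hZne k hy x
  have hcomm : ∫ y in Zᶜ, (G d Z (k+1) x₀ y).curryLeft = (P d Z x₀ (k+1)).curryLeft := by
    have := ContinuousLinearEquiv.integral_comp_comm (𝕜 := ℝ)
      (E := ContinuousMultilinearMap ℝ (fun _ : Fin (k+1) => (Fin d → ℝ)) ℝ)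
      (F := (Fin d → ℝ) →L[ℝ] ContinuousMultilinearMap ℝ (fun _ : Fin k => (Fin d → ℝ)) ℝ)
      ((continuousMultilinearCurryLeftEquiv ℝ
        (fun _ : Fin (k+1) => (Fin d → ℝ)) ℝ).toContinuousLinearEquiv)
      (μ := volume.restrict Zᶜ) (fun y => G d Z (k+1) x₀ y)
    exact this
  rwa [hcomm] at key

/-- the Taylor series property -/
lemma taylor (hd : 0 < d) (hZ : IsClosed Z) (hZne : Z.Nonempty) :
    HasFTaylorSeriesUpToOn ((⊤:ℕ∞)) (Delta d Z) (P d Z) Zᶜ := by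
  constructor
  · intro x hx
    rw [P_zero]
    simp
  · intro m _ x hx
    exact (P_deriv hd hZ hZne m hx).hasFDerivWithinAt
  · intro m _
    exact fun x hx => ((P_deriv hd hZ hZne m hx).continuousAt).continuousWithinAt

/-- comparability and positivity -/
lemma delta_lower (hd : 0 < d) (hZ : IsClosed Z) (hZne : Z.Nonempty) :
    ∃ c₁ : ℝ, 0 < c₁ ∧ ∀ x ∈ Zᶜ, c₁ * infDist x Z ≤ Delta d Z x := by
  set v := (volume (ball (0 : Fin d → ℝ) 1)).toReal with hv
  have hvpos : 0 < v :=
    ENNReal.toReal_pos (measure_ball_pos _ _ one_pos).ne' measure_ball_lt_top.ne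
  refine ⟨(5/4:ℝ) ^ ((1:ℤ) - d) * (1/4:ℝ)^d * v, by positivity, ?_⟩
  intro x hx
  have hrx := rpos hZ hZne hx
  set R := infDist x Z with hR
  set f : (Fin d → ℝ) → ℝ :=
    fun y => (infDist y Z ^ (1 - (d:ℤ))) * phi d ((infDist y Z)⁻¹ • (x - y)) with hf
  have hfnn : ∀ y, 0 ≤ f y := fun y =>
    mul_nonneg (zpow_nonneg infDist_nonneg _) (phi_nonneg _ _)
  -- points of the small ball are far from `Z`
  have hball' : ∀ y ∈ closedBall x (R/4), (3/4) * R ≤ infDist y Z := by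
    intro y hy
    have h1 := abs_le.1 (rlip (Z := Z) x y)
    have h2 : ‖x - y‖ ≤ R / 4 := by
      rw [mem_closedBall, dist_comm, dist_eq_norm] at hy
      exact hy
    linarith [h1.2]
  have hball : closedBall x (R/4) ⊆ Zᶜ := by
    intro y hy
    have := hball' y hy
    intro hyZ
    rw [infDist_zero_of_mem hyZ] at this
    linarith
  -- integrability
  have hint : IntegrableOn f Zᶜ := by
    have h2 := (G_int hd hZ hZne 0 hx)
    have h3 : Integrable (fun y => (continuousMultilinearCurryFin0 ℝ (Fin d → ℝ) ℝ)
        (G d Z 0 x y)) (volume.restrict Zᶜ) :=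
      ((continuousMultilinearCurryFin0 ℝ (Fin d → ℝ) ℝ).toLinearIsometry.toContinuousLinearMap
        ).integrable_comp h2
    have h4 : (fun y => (continuousMultilinearCurryFin0 ℝ (Fin d → ℝ) ℝ) (G d Z 0 x y)) = f := by
      funext y
      rw [G, iteratedFDeriv_zero_eq_comp, show ee d 0 = 1 - (d:ℤ) from by simp [ee]]
      show (continuousMultilinearCurryFin0 ℝ (Fin d → ℝ) ℝ)
        (_ • (continuousMultilinearCurryFin0 ℝ (Fin d → ℝ) ℝ).symm _) = _
      rw [_root_.map_smul, LinearIsometryEquiv.apply_symm_apply, smul_eq_mul]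
    rwa [h4] at h3
  -- pointwise lower bound on the small ball
  have hpt : ∀ y ∈ closedBall x (R/4), ((5/4) * R) ^ ((1:ℤ) - d) ≤ f y := by
    intro y hy
    have h3 := hball' y hy
    have hy' : 0 < infDist y Z := by linarith
    have h1 := abs_le.1 (rlip (Z := Z) x y)
    have h2 : ‖x - y‖ ≤ R / 4 := by
      rw [mem_closedBall, dist_comm, dist_eq_norm] at hy
      exact hy
    have hub : infDist y Z ≤ (5/4) * R := by linarith [h1.1]
    have hphi : phi d ((infDist y Z)⁻¹ • (x - y)) = 1 := by
      apply phi_one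
      rw [norm_smul, Real.norm_eq_abs, abs_of_nonneg (inv_nonneg.2 hy'.le)]
      rw [inv_mul_le_iff₀ hy']
      nlinarith [h2, h3, hrx]
    rw [hf]
    simp only
    rw [hphi, mul_one]
    exact zpow_anti hy' hub (by omega)
  -- put everything together
  have hmono1 : ∫ y in closedBall x (R/4), f y ≤ ∫ y in Zᶜ, f y := by
    apply setIntegral_mono_set hint
    · exact (ae_restrict_iff' hZ.isOpen_compl.measurableSet).2 (ae_of_all _ fun y _ => hfnn y)
    · exact HasSubset.Subset.eventuallyLE hball
  have hmono2 : ∫ y in closedBall x (R/4), ((5/4) * R) ^ ((1:ℤ) - d) ≤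
      ∫ y in closedBall x (R/4), f y := by
    apply setIntegral_mono_on
    · exact integrableOn_const measure_closedBall_lt_top.ne
    · exact hint.mono_set hball
    · exact measurableSet_closedBall
    · exact hpt
  have hconst : ∫ _y in closedBall x (R/4), ((5/4) * R) ^ ((1:ℤ) - d) =
      (volume (closedBall x (R/4))).toReal * ((5/4) * R) ^ ((1:ℤ) - d) := by
    rw [setIntegral_const, smul_eq_mul, measureReal_def]
  have hvol : (volume (closedBall x (R/4))).toReal = (R/4)^d * v := by
    have heq : volume (closedBall x (R/4)) =
        ENNReal.ofReal ((R/4) ^ d) * volume (ball (0 : Fin d → ℝ) 1) := by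
      have := MeasureTheory.Measure.addHaar_closedBall (μ := volume) x
        (r := R/4) (by positivity)
      rwa [Module.finrank_fin_fun] at this
    rw [heq, ENNReal.toReal_mul, ENNReal.toReal_ofReal (by positivity)]
  have halg : (R/4)^d * v * ((5/4) * R) ^ ((1:ℤ) - d) =
      ((5/4:ℝ) ^ ((1:ℤ) - d) * (1/4:ℝ)^d * v) * R := by
    have h5 : ((5/4:ℝ) * R) ^ ((1:ℤ) - d) = (5/4:ℝ)^((1:ℤ)-d) * R^((1:ℤ)-d) := mul_zpow _ _ _
    have h6 : (R/4:ℝ)^d = (1/4:ℝ)^d * R^d := by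
      rw [show (R/4:ℝ) = (1/4)*R by ring, mul_pow]
    have h7 : (R:ℝ)^(d:ℤ) * R^((1:ℤ)-d) = R := by
      rw [← zpow_add₀ hrx.ne']; norm_num
    rw [h5, h6, ← zpow_natCast R d]
    calc (1/4:ℝ)^d * R^(d:ℤ) * v * ((5/4:ℝ)^((1:ℤ)-d) * R^((1:ℤ)-d))
        = (5/4:ℝ)^((1:ℤ)-d) * (1/4:ℝ)^d * v * (R^(d:ℤ) * R^((1:ℤ)-d)) := by ring
      _ = _ := by rw [h7]
  have hDelta : Delta d Z x = ∫ y in Zᶜ, f y := rfl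
  rw [hDelta]
  calc ((5/4:ℝ) ^ ((1:ℤ) - d) * (1/4:ℝ)^d * v) * R
      = (R/4)^d * v * ((5/4) * R) ^ ((1:ℤ) - d) := halg.symm
    _ = ∫ _y in closedBall x (R/4), ((5/4) * R) ^ ((1:ℤ) - d) := by rw [hconst, hvol]
    _ ≤ ∫ y in closedBall x (R/4), f y := hmono2
    _ ≤ ∫ y in Zᶜ, f y := hmono1

/-- bound for the norm of `P x k` -/
lemma P_norm (hd : 0 < d) (hZ : IsClosed Z) (hZne : Z.Nonempty) (k : ℕ) :
    ∃ B : ℝ, 0 ≤ B ∧ ∀ x ∈ Zᶜ, ‖P d Z x k‖ ≤ B * infDist x Z ^ ((1:ℤ) - k) := by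
  obtain ⟨C, hC0, hC⟩ := phi_deriv_bound d k
  set v := (volume (ball (0 : Fin d → ℝ) 1)).toReal with hv
  have hv0 : 0 ≤ v := ENNReal.toReal_nonneg
  refine ⟨C * ((1/2):ℝ) ^ ee d k * (2:ℝ)^d * v, by positivity, ?_⟩
  intro x hx
  have hrx := rpos hZ hZne hx
  have hbd : ∀ᵐ y ∂(volume.restrict Zᶜ), ‖G d Z k x y‖ ≤
      (closedBall x (2 * infDist x Z)).indicator
        (fun _ => C * ((1/2) * infDist x Z) ^ ee d k) y :=
    (ae_restrict_iff' hZ.isOpen_compl.measurableSet).2 (ae_of_all _ fun y hy =>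
      G_bound hd hZ hZne k hC0 hC hx
        (by simp only [sub_self, norm_zero]; positivity) hy)
  have h1 : ‖P d Z x k‖ ≤ ∫ y in Zᶜ, (closedBall x (2 * infDist x Z)).indicator
      (fun _ => C * ((1/2) * infDist x Z) ^ ee d k) y :=
    norm_integral_le_of_norm_le (bound_integrable x _ _) hbd
  have h2 : ∫ y in Zᶜ, (closedBall x (2 * infDist x Z)).indicator
      (fun _ => C * ((1/2) * infDist x Z) ^ ee d k) y =
      ((volume.restrict Zᶜ) (closedBall x (2 * infDist x Z))).toReal *
        (C * ((1/2) * infDist x Z) ^ ee d k) := by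
    rw [integral_indicator_const _ measurableSet_closedBall, smul_eq_mul, measureReal_def]
  have h3 : ((volume.restrict Zᶜ) (closedBall x (2 * infDist x Z))).toReal ≤
      (2 * infDist x Z)^d * v := by
    have hle : (volume.restrict Zᶜ) (closedBall x (2 * infDist x Z)) ≤
        volume (closedBall x (2 * infDist x Z)) := by
      rw [Measure.restrict_apply measurableSet_closedBall]
      exact measure_mono inter_subset_left
    have heq : volume (closedBall x (2 * infDist x Z)) =
        ENNReal.ofReal ((2 * infDist x Z) ^ d) * volume (ball (0 : Fin d → ℝ) 1) := by
      have := MeasureTheory.Measure.addHaar_closedBall (μ := volume) x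
        (r := 2 * infDist x Z) (by positivity)
      rwa [Module.finrank_fin_fun] at this
    calc ((volume.restrict Zᶜ) (closedBall x (2 * infDist x Z))).toReal
        ≤ (volume (closedBall x (2 * infDist x Z))).toReal := by
          apply ENNReal.toReal_mono _ hle
          rw [heq]
          exact (ENNReal.mul_lt_top ENNReal.ofReal_lt_top measure_ball_lt_top).ne
      _ = (2 * infDist x Z)^d * v := by
          rw [heq, ENNReal.toReal_mul, ENNReal.toReal_ofReal (by positivity)]
  have hnn : (0:ℝ) ≤ C * ((1/2) * infDist x Z) ^ ee d k :=
    mul_nonneg hC0 (zpow_nonneg (by positivity) _)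
  have halg : (2 * infDist x Z)^d * v * (C * ((1/2) * infDist x Z) ^ ee d k) =
      (C * ((1/2):ℝ) ^ ee d k * (2:ℝ)^d * v) * infDist x Z ^ ((1:ℤ) - k) := by
    rw [mul_pow, mul_zpow]
    rw [show ((1:ℤ) - k) = (d:ℤ) + ee d k by simp [ee]; ring]
    rw [zpow_add₀ hrx.ne', ← zpow_natCast (infDist x Z) d]
    ring
  calc ‖P d Z x k‖ ≤ ((volume.restrict Zᶜ) (closedBall x (2 * infDist x Z))).toReal *
        (C * ((1/2) * infDist x Z) ^ ee d k) := by rw [← h2]; exact h1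
    _ ≤ (2 * infDist x Z)^d * v * (C * ((1/2) * infDist x Z) ^ ee d k) :=
        mul_le_mul_of_nonneg_right h3 hnn
    _ = _ := halg

end Stein

/-- Regularized distance, Stein: for every nonempty closed `Z ⊆ ℝ^d`
there is a smooth positive `Δ` on `W = ℝ^d \ Z`, comparable to the distance to `Z`,
whose `k`-th derivatives are `O(δ(x)^{1-k})`. -/
theorem stmt13 (d : ℕ) (Z : Set (Fin d → ℝ)) (hZ : IsClosed Z) (hZne : Z.Nonempty) :
    ∃ (Δ : (Fin d → ℝ) → ℝ), ContDiffOn ℝ (⊤ : ℕ∞) Δ Zᶜ ∧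
      (∀ x ∈ Zᶜ, 0 < Δ x) ∧
      ∃ c₁ c₂ : ℝ, 0 < c₁ ∧ c₁ < c₂ ∧
        (∀ x ∈ Zᶜ, c₁ * Metric.infDist x Z ≤ Δ x ∧ Δ x ≤ c₂ * Metric.infDist x Z) ∧
        ∀ k : ℕ, ∃ B : ℝ, 0 ≤ B ∧ ∀ x ∈ Zᶜ,
          ‖iteratedFDerivWithin ℝ k Δ Zᶜ x‖ ≤ B * Metric.infDist x Z ^ ((1 : ℤ) - k) := by
  rcases Nat.eq_zero_or_pos d with hd | hd
  · -- degenerate case `d = 0` : the complement of `Z` is empty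
    have hempty : Zᶜ = (∅ : Set (Fin d → ℝ)) := by
      subst hd
      obtain ⟨z, hz⟩ := hZne
      ext x
      simp only [mem_compl_iff, mem_empty_iff_false, iff_false, not_not]
      convert hz using 1
    rw [hempty]
    refine ⟨fun _ => 1, fun x hx => absurd hx (notMem_empty x), by simp, 1, 2, one_pos,
      one_lt_two, by simp, fun k => ⟨0, le_rfl, by simp⟩⟩
  · -- main case
    obtain ⟨c₁, hc₁pos, hc₁⟩ := Stein.delta_lower hd hZ hZne
    obtain ⟨B₀, hB₀0, hB₀⟩ := Stein.P_norm hd hZ hZne 0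
    have hTaylor := Stein.taylor hd hZ hZne
    have hueq : ∀ (k : ℕ), ∀ x ∈ Zᶜ,
        iteratedFDerivWithin ℝ k (Stein.Delta d Z) Zᶜ x = Stein.P d Z x k := fun k x hx =>
      (hTaylor.eq_iteratedFDerivWithin_of_uniqueDiffOn (by exact_mod_cast le_top (α := ℕ∞))
        (hZ.isOpen_compl.uniqueDiffOn) hx).symm
    have hrpos : ∀ x ∈ Zᶜ, 0 < Metric.infDist x Z := fun x hx => Stein.rpos hZ hZne hx
    have hupper : ∀ x ∈ Zᶜ, Stein.Delta d Z x ≤ B₀ * Metric.infDist x Z := by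
      intro x hx
      have h1 := hB₀ x hx
      rw [Stein.P_zero] at h1
      rw [LinearIsometryEquiv.norm_map] at h1
      calc Stein.Delta d Z x ≤ ‖Stein.Delta d Z x‖ := Real.le_norm_self _
        _ ≤ B₀ * Metric.infDist x Z ^ ((1:ℤ) - (0:ℕ)) := h1
        _ = B₀ * Metric.infDist x Z := by norm_num
    refine ⟨Stein.Delta d Z, hTaylor.contDiffOn, ?_, c₁, B₀ + c₁ + 1, hc₁pos,
      by linarith, ?_, ?_⟩
    · intro x hx
      have := hc₁ x hx
      nlinarith [hrpos x hx]
    · intro x hx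
      refine ⟨hc₁ x hx, (hupper x hx).trans ?_⟩
      nlinarith [(hrpos x hx).le, hc₁pos.le]
    · intro k
      obtain ⟨B, hB0, hB⟩ := Stein.P_norm hd hZ hZne k
      exact ⟨B, hB0, fun x hx => by rw [hueq k x hx]; exact hB x hx⟩
end

section
/- Let (a_m^{(i)})_{m,i ≥ 0} be a doubly indexed family of positive real numbers. Then there exists a sequence (b_m)_{m≥0} of positive real numbers such that for every i ≥ 0, Σ_{m≥0} b_m · a_m^{(i)} < ∞. -/
/-- For any doubly indexed family of positive reals `(a_m^{(i)})` there is a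
positive sequence `(b_m)` with `Σ_m b_m a_m^{(i)} < ∞` for every `i`. -/
theorem stmt18 (a : ℕ → ℕ → ℝ) (ha : ∀ i m, 0 < a i m) :
    ∃ b : ℕ → ℝ, (∀ m, 0 < b m) ∧ ∀ i, Summable (fun m => b m * a i m) := by
  set S : ℕ → ℝ := fun m => 1 + ∑ i ∈ Finset.range (m + 1), a i m with hS
  have hSpos : ∀ m, 0 < S m := by
    intro m
    have : 0 ≤ ∑ i ∈ Finset.range (m + 1), a i m :=
      Finset.sum_nonneg fun i _ => (ha i m).le
    simp [hS]; linarith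
  refine ⟨fun m => (1/2 : ℝ)^m / S m, fun m => div_pos (by positivity) (hSpos m), fun i => ?_⟩
  rw [← summable_nat_add_iff i]
  show Summable fun n => (1/2:ℝ)^(n+i) / S (n+i) * a i (n+i)
  have hsum : Summable fun n : ℕ => (1/2 : ℝ)^(n + i) :=
    (summable_geometric_of_lt_one (by norm_num) (by norm_num)).comp_injective
      (add_left_injective i)
  refine hsum.of_nonneg_of_le
    (fun n => (mul_pos (div_pos (by positivity) (hSpos _)) (ha i _)).le) fun n => ?_
  have hle : a i (n + i) ≤ S (n + i) := by
    have h1 : a i (n + i) ≤ ∑ j ∈ Finset.range (n + i + 1), a j (n + i) :=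
      Finset.single_le_sum (fun j _ => (ha j (n + i)).le)
        (Finset.mem_range.mpr (by omega))
    simp only [hS]; linarith
  have hS' := hSpos (n + i)
  calc (1/2 : ℝ)^(n+i) / S (n+i) * a i (n+i)
      ≤ (1/2 : ℝ)^(n+i) / S (n+i) * S (n+i) := by
        apply mul_le_mul_of_nonneg_left hle; positivity
    _ = (1/2 : ℝ)^(n+i) := by field_simp
end

section
/- Let θ : ℝ^d → ℝ^d be a diffeomorphism (a smooth bijection with smooth inverse), let X be a smooth vector field on ℝ^d, and let P(z) = Σ_{m≥0} a_m z^m be a formal power series with complex coefficients. Define the pullback vector field θ^*X by (θ^*X)(x) = (Dθ(x))^{-1}[X(θ(x))]. Then for any smooth compactly supported φ : ℝ^d → ℂ: φ belongs to dom(P(X)) if and only if φ ∘ θ belongs to dom(P(θ^*X)); and in that case, P(θ^*X)(φ ∘ θ) = (P(X)φ) ∘ θ. -/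
/-- `φ ∈ dom(P(X))` for the formal series `P(z) = Σ a_m z^m`:
`Σ_m |a_m| ‖∂^α X^m φ‖_∞ < ∞` for every multi-index `α`. -/
def memDom {d : ℕ} (a : ℕ → ℂ) (X : (Fin d → ℝ) → (Fin d → ℝ))
    (φ : (Fin d → ℝ) → ℂ) : Prop :=
  ∀ α : Fin d → ℕ,
    Summable (fun m : ℕ => ‖a m‖ * ⨆ x, ‖mpd α ((vfApply X)^[m] φ) x‖)

/-- The pullback of a vector field `X` along a diffeomorphism `θ`:
`(θ^*X)(x) = (Dθ(x))⁻¹ [X(θ(x))]`. -/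
noncomputable def pullbackVF {d : ℕ} (θ : (Fin d → ℝ) → (Fin d → ℝ))
    (X : (Fin d → ℝ) → (Fin d → ℝ)) : (Fin d → ℝ) → (Fin d → ℝ) :=
  fun x => (fderiv ℝ θ x).inverse (X (θ x))

/-! ### Auxiliary material -/

open Function Topology

namespace Stmt19Aux

variable {d : ℕ}

abbrev sm {E F : Type*} [NormedAddCommGroup E] [NormedSpace ℝ E] [NormedAddCommGroup F]
    [NormedSpace ℝ F] (f : E → F) : Prop := ContDiff ℝ (⊤ : ℕ∞) f

lemma sm_fderiv {E F : Type*} [NormedAddCommGroup E] [NormedSpace ℝ E] [NormedAddCommGroup F]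
    [NormedSpace ℝ F] {f : E → F} (hf : sm f) : sm (fderiv ℝ f) :=
  hf.fderiv_right (by exact_mod_cast le_refl _)

lemma sm_pd {i : Fin d} {φ : (Fin d → ℝ) → ℂ} (hφ : sm φ) : sm (pd i φ) :=
  (sm_fderiv hφ).clm_apply contDiff_const

lemma sm_vfApply {X : (Fin d → ℝ) → (Fin d → ℝ)} {φ : (Fin d → ℝ) → ℂ} (hX : sm X) (hφ : sm φ) :
    sm (vfApply X φ) := (sm_fderiv hφ).clm_apply hX

lemma sm_vfApply_iter {X : (Fin d → ℝ) → (Fin d → ℝ)} {φ : (Fin d → ℝ) → ℂ}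
    (hX : sm X) (hφ : sm φ) (m : ℕ) : sm ((vfApply X)^[m] φ) := by
  induction m with
  | zero => exact hφ
  | succ m ih => rw [Function.iterate_succ_apply']; exact sm_vfApply hX ih

lemma tsupport_pd {i : Fin d} (φ : (Fin d → ℝ) → ℂ) : tsupport (pd i φ) ⊆ tsupport φ := by
  apply closure_minimal _ isClosed_closure
  intro x hx
  simp only [Function.mem_support, pd, ne_eq] at hx
  by_contra hxs
  have : fderiv ℝ φ x = 0 := by
    by_contra h
    exact hxs (support_fderiv_subset ℝ h)
  simp [this] at hx

lemma tsupport_vfApply {X : (Fin d → ℝ) → (Fin d → ℝ)} (φ : (Fin d → ℝ) → ℂ) :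
    tsupport (vfApply X φ) ⊆ tsupport φ := by
  apply closure_minimal _ isClosed_closure
  intro x hx
  simp only [Function.mem_support, vfApply, ne_eq] at hx
  by_contra hxs
  have : fderiv ℝ φ x = 0 := by
    by_contra h
    exact hxs (support_fderiv_subset ℝ h)
  simp [this] at hx

lemma tsupport_vfApply_iter {X : (Fin d → ℝ) → (Fin d → ℝ)} (φ : (Fin d → ℝ) → ℂ) (m : ℕ) :
    tsupport ((vfApply X)^[m] φ) ⊆ tsupport φ := by
  induction m with
  | zero => exact le_refl _
  | succ m ih =>
    rw [Function.iterate_succ_apply']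
    exact (tsupport_vfApply _).trans ih

/-! #### `pdList` -/

noncomputable def pdList {d : ℕ} (L : List (Fin d)) (φ : (Fin d → ℝ) → ℂ) : (Fin d → ℝ) → ℂ :=
  L.foldr pd φ

lemma sm_pdList {L : List (Fin d)} {φ : (Fin d → ℝ) → ℂ} (hφ : sm φ) : sm (pdList L φ) := by
  induction L with
  | nil => exact hφ
  | cons i L ih => exact sm_pd ih

lemma tsupport_pdList (L : List (Fin d)) (φ : (Fin d → ℝ) → ℂ) :
    tsupport (pdList L φ) ⊆ tsupport φ := by
  induction L with
  | nil => exact le_refl _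
  | cons i L ih => exact (tsupport_pd _).trans ih

lemma sm_iteratedFDeriv {E F : Type*} [NormedAddCommGroup E] [NormedSpace ℝ E]
    [NormedAddCommGroup F] [NormedSpace ℝ F] {f : E → F} (hf : sm f) (n : ℕ) :
    sm (iteratedFDeriv ℝ n f) :=
  hf.iteratedFDeriv_right (by exact_mod_cast le_top)

lemma iteratedFDeriv_basis_eq {n : ℕ} {φ : (Fin d → ℝ) → ℂ} (hφ : sm φ)
    (σ : Fin n → Fin d) (x : Fin d → ℝ) :
    iteratedFDeriv ℝ n φ x (fun k => Pi.single (σ k) 1) = pdList (List.ofFn σ) φ x := by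
  induction n generalizing φ x with
  | zero => simp [pdList, iteratedFDeriv_zero_apply]
  | succ n ih =>
    rw [iteratedFDeriv_succ_apply_left]
    have hdiff : DifferentiableAt ℝ (iteratedFDeriv ℝ n φ) x :=
      (sm_iteratedFDeriv hφ n).differentiable (by simp) x
    have htail : (Fin.tail fun k : Fin (n+1) => (Pi.single (σ k) 1 : Fin d → ℝ))
        = fun k : Fin n => (Pi.single (σ (Fin.succ k)) 1 : Fin d → ℝ) := rfl
    rw [htail]
    have h1 : (fderiv ℝ (iteratedFDeriv ℝ n φ) x (Pi.single (σ 0) 1))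
        (fun k : Fin n => (Pi.single (σ (Fin.succ k)) 1 : Fin d → ℝ))
        = fderiv ℝ (fun y => iteratedFDeriv ℝ n φ y
            (fun k : Fin n => (Pi.single (σ (Fin.succ k)) 1 : Fin d → ℝ))) x (Pi.single (σ 0) 1) :=
      (fderiv_continuousMultilinear_apply_const_apply hdiff
        (fun k : Fin n => (Pi.single (σ (Fin.succ k)) 1 : Fin d → ℝ)) (Pi.single (σ 0) 1)).symm
    rw [h1]
    have h2 : (fun y => iteratedFDeriv ℝ n φ y
        (fun k : Fin n => (Pi.single (σ (Fin.succ k)) 1 : Fin d → ℝ)))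
        = pdList (List.ofFn (σ ∘ Fin.succ)) φ := by
      funext y
      exact ih hφ (σ ∘ Fin.succ) y
    rw [h2, List.ofFn_succ]
    rfl

lemma pd_comm {i j : Fin d} {φ : (Fin d → ℝ) → ℂ} (hφ : sm φ) :
    pd i (pd j φ) = pd j (pd i φ) := by
  funext x
  have key : ∀ (a b : Fin d),
      pd a (pd b φ) x = fderiv ℝ (fderiv ℝ φ) x (Pi.single a 1) (Pi.single b 1) := by
    intro a b
    show fderiv ℝ (fun y => fderiv ℝ φ y (Pi.single b 1)) x (Pi.single a 1) = _
    rw [fderiv_clm_apply ((sm_fderiv hφ).differentiable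
      (by simp) x) (differentiableAt_const _)]
    simp
  rw [key i j, key j i]
  exact (hφ.contDiffAt.isSymmSndFDerivAt (by
    have : ((2:ℕ∞) : WithTop ℕ∞) ≤ ((⊤:ℕ∞) : WithTop ℕ∞) := WithTop.coe_le_coe.mpr le_top
    simpa using this)) _ _

lemma pdList_perm {L L' : List (Fin d)} (h : L.Perm L') {φ : (Fin d → ℝ) → ℂ} (hφ : sm φ) :
    pdList L φ = pdList L' φ := by
  induction h with
  | nil => rfl
  | cons a h ih => show pd a (pdList _ φ) = pd a (pdList _ φ); rw [ih]
  | swap a b l => exact pd_comm (sm_pdList hφ)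
  | trans h1 h2 ih1 ih2 => rw [ih1, ih2]

def canonList {d : ℕ} (α : Fin d → ℕ) : List (Fin d) :=
  (List.finRange d).flatMap fun i => List.replicate (α i) i

lemma pdList_replicate (k : ℕ) (i : Fin d) (φ : (Fin d → ℝ) → ℂ) :
    pdList (List.replicate k i) φ = (pd i)^[k] φ := by
  induction k with
  | zero => rfl
  | succ k ih =>
    rw [List.replicate_succ, Function.iterate_succ_apply']
    show pd i (pdList (List.replicate k i) φ) = _
    rw [ih]

lemma pdList_append (L1 L2 : List (Fin d)) (φ : (Fin d → ℝ) → ℂ) :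
    pdList (L1 ++ L2) φ = pdList L1 (pdList L2 φ) := by
  simp [pdList, List.foldr_append]

lemma mpd_eq_pdList (α : Fin d → ℕ) (φ : (Fin d → ℝ) → ℂ) :
    mpd α φ = pdList (canonList α) φ := by
  show ((List.finRange d).map (fun i => (pd i)^[α i])).foldr (fun op ψ => op ψ) φ = _
  unfold canonList
  induction (List.finRange d) with
  | nil => rfl
  | cons i l ih =>
    rw [List.map_cons, List.foldr_cons, List.flatMap_cons, pdList_append, ih,
      pdList_replicate]

lemma count_canonList (α : Fin d → ℕ) (j : Fin d) : (canonList α).count j = α j := by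
  unfold canonList
  rw [List.count_flatMap]
  have h1 : ∀ i : Fin d, (List.count j ∘ fun i => List.replicate (α i) i) i
      = if i = j then α j else 0 := by
    intro i
    simp only [Function.comp_apply, List.count_replicate]
    by_cases h : i = j <;> simp [h, beq_iff_eq]
  rw [List.map_congr_left (fun i _ => h1 i), ← Fin.sum_univ_def]
  simp

lemma sm_mpd {α : Fin d → ℕ} {φ : (Fin d → ℝ) → ℂ} (hφ : sm φ) : sm (mpd α φ) := by
  rw [mpd_eq_pdList]; exact sm_pdList hφ

lemma tsupport_mpd (α : Fin d → ℕ) (φ : (Fin d → ℝ) → ℂ) :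
    tsupport (mpd α φ) ⊆ tsupport φ := by
  rw [mpd_eq_pdList]; exact tsupport_pdList _ _

lemma multilinear_norm_expand {n : ℕ}
    (f : ContinuousMultilinearMap ℝ (fun _ : Fin n => (Fin d → ℝ)) ℂ)
    (v : Fin n → (Fin d → ℝ)) :
    ‖f v‖ ≤ (∑ σ : Fin n → Fin d, ‖f (fun k => Pi.single (σ k) 1)‖) * ∏ k, ‖v k‖ := by
  have hv : ∀ k, v k = ∑ i : Fin d, v k i • (Pi.single i 1 : Fin d → ℝ) := by
    intro k; funext j
    simp [Pi.single_apply, Finset.sum_ite_eq]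
  have hexp : f v = ∑ σ : Fin n → Fin d,
      (∏ k, v k (σ k)) • f (fun k => Pi.single (σ k) 1) := by
    calc f v = f (fun k => ∑ i : Fin d, v k i • (Pi.single i 1 : Fin d → ℝ)) := by
            congr 1; funext k; exact hv k
      _ = ∑ σ : Fin n → Fin d, f (fun k => v k (σ k) • (Pi.single (σ k) 1 : Fin d → ℝ)) :=
            f.toMultilinearMap.map_sum _
      _ = ∑ σ : Fin n → Fin d, (∏ k, v k (σ k)) • f (fun k => Pi.single (σ k) 1) := by
            refine Finset.sum_congr rfl fun σ _ => ?_
            exact f.toMultilinearMap.map_smul_univ _ _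
  rw [hexp]
  calc ‖∑ σ : Fin n → Fin d, (∏ k, v k (σ k)) • f (fun k => Pi.single (σ k) 1)‖
      ≤ ∑ σ : Fin n → Fin d, ‖(∏ k, v k (σ k)) • f (fun k => Pi.single (σ k) 1)‖ :=
        norm_sum_le _ _
    _ ≤ ∑ σ : Fin n → Fin d, ‖f (fun k => Pi.single (σ k) 1)‖ * ∏ k, ‖v k‖ := by
        refine Finset.sum_le_sum fun σ _ => ?_
        rw [norm_smul, mul_comm]
        refine mul_le_mul_of_nonneg_left ?_ (norm_nonneg _)
        rw [Real.norm_eq_abs, Finset.abs_prod]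
        refine Finset.prod_le_prod (fun k _ => abs_nonneg _) fun k _ => ?_
        exact norm_le_pi_norm (v k) (σ k)
    _ = (∑ σ : Fin n → Fin d, ‖f (fun k => Pi.single (σ k) 1)‖) * ∏ k, ‖v k‖ := by
        rw [Finset.sum_mul]

/-! #### Pointwise bounds relating `mpd` and `iteratedFDeriv` -/

lemma mpd_le_iteratedFDeriv {α : Fin d → ℕ} {g : (Fin d → ℝ) → ℂ} (hg : sm g)
    (x : Fin d → ℝ) :
    ‖mpd α g x‖ ≤ ‖iteratedFDeriv ℝ ((canonList α).length) g x‖ := by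
  have h1 : mpd α g x = iteratedFDeriv ℝ ((canonList α).length) g x
      (fun k => Pi.single ((canonList α).get k) 1) := by
    rw [mpd_eq_pdList]
    conv_lhs => rw [← List.ofFn_get (canonList α)]
    exact (iteratedFDeriv_basis_eq hg _ x).symm
  rw [h1]
  calc ‖iteratedFDeriv ℝ ((canonList α).length) g x (fun k => Pi.single ((canonList α).get k) 1)‖
      ≤ ‖iteratedFDeriv ℝ ((canonList α).length) g x‖
        * ∏ k, ‖(Pi.single ((canonList α).get k) 1 : Fin d → ℝ)‖ :=
        ContinuousMultilinearMap.le_opNorm _ _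
    _ = ‖iteratedFDeriv ℝ ((canonList α).length) g x‖ := by
        simp [Pi.norm_single]

/-- sup norm of `mpd β ψ` as an index-dependent quantity -/
noncomputable def supMpd {d : ℕ} (β : Fin d → ℕ) (ψ : (Fin d → ℝ) → ℂ) : ℝ :=
  ⨆ z, ‖mpd β ψ z‖

lemma supMpd_nonneg (β : Fin d → ℕ) (ψ : (Fin d → ℝ) → ℂ) : 0 ≤ supMpd β ψ :=
  Real.iSup_nonneg fun _ => norm_nonneg _

lemma le_supMpd {β : Fin d → ℕ} {ψ : (Fin d → ℝ) → ℂ} (hψ : sm ψ)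
    (hψc : HasCompactSupport ψ) (z : Fin d → ℝ) : ‖mpd β ψ z‖ ≤ supMpd β ψ := by
  have hc : HasCompactSupport (mpd β ψ) :=
    hψc.of_isClosed_subset isClosed_closure (tsupport_mpd β ψ)
  exact le_ciSup (((sm_mpd hψ).continuous.norm).bddAbove_range_of_hasCompactSupport hc.norm) z

lemma iteratedFDeriv_le_sum_supMpd {ψ : (Fin d → ℝ) → ℂ} (hψ : sm ψ)
    (hψc : HasCompactSupport ψ) (i : ℕ) (y : Fin d → ℝ) :
    ‖iteratedFDeriv ℝ i ψ y‖
      ≤ ∑ σ : Fin i → Fin d, supMpd (fun j => (List.ofFn σ).count j) ψ := by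
  refine ContinuousMultilinearMap.opNorm_le_bound
    (Finset.sum_nonneg fun σ _ => supMpd_nonneg _ _) fun v => ?_
  refine (multilinear_norm_expand _ v).trans ?_
  refine mul_le_mul_of_nonneg_right ?_ (Finset.prod_nonneg fun k _ => norm_nonneg _)
  refine Finset.sum_le_sum fun σ _ => ?_
  have h1 : iteratedFDeriv ℝ i ψ y (fun k => Pi.single (σ k) 1)
      = mpd (fun j => (List.ofFn σ).count j) ψ y := by
    rw [iteratedFDeriv_basis_eq hψ, mpd_eq_pdList]
    refine congrFun (pdList_perm ?_ hψ) y
    rw [List.perm_iff_count]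
    intro b
    rw [count_canonList]
  rw [h1]
  exact le_supMpd hψ hψc y
section Diffeo
variable {θ θinv : (Fin d → ℝ) → (Fin d → ℝ)}
  (hθ : sm θ) (hθinv : sm θinv)
  (hli : Function.LeftInverse θinv θ) (hri : Function.RightInverse θinv θ)

include hθ hθinv hli hri

/-- the derivative of θ as a continuous linear equiv -/
noncomputable def dEquiv (x : Fin d → ℝ) : (Fin d → ℝ) ≃L[ℝ] (Fin d → ℝ) := by
  refine ContinuousLinearEquiv.equivOfInverse (fderiv ℝ θ x) (fderiv ℝ θinv (θ x)) ?_ ?_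
  · intro v
    have h1 : fderiv ℝ (θinv ∘ θ) x = (fderiv ℝ θinv (θ x)).comp (fderiv ℝ θ x) :=
      fderiv_comp x (hθinv.differentiable (by simp) (θ x))
        (hθ.differentiable (by simp) x)
    have h2 : θinv ∘ θ = id := funext hli
    rw [h2, fderiv_id] at h1
    have := congrArg (fun (L : (Fin d → ℝ) →L[ℝ] (Fin d → ℝ)) => L v) h1.symm
    simpa using this
  · intro v
    have h1 : fderiv ℝ (θ ∘ θinv) (θ x) = (fderiv ℝ θ (θinv (θ x))).comp (fderiv ℝ θinv (θ x)) :=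
      fderiv_comp (θ x) (hθ.differentiable (by simp) (θinv (θ x)))
        (hθinv.differentiable (by simp) (θ x))
    have h2 : θ ∘ θinv = id := funext hri
    rw [h2, fderiv_id, hli x] at h1
    have := congrArg (fun (L : (Fin d → ℝ) →L[ℝ] (Fin d → ℝ)) => L v) h1.symm
    simpa using this

lemma fderivDiffeo_inverse (x : Fin d → ℝ) :
    (fderiv ℝ θ x).inverse = fderiv ℝ θinv (θ x) := by
  have : fderiv ℝ θ x = (dEquiv hθ hθinv hli hri x : (Fin d → ℝ) →L[ℝ] (Fin d → ℝ)) := rfl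
  rw [this, ContinuousLinearMap.inverse_equiv]
  rfl

lemma sm_pullbackVF {X : (Fin d → ℝ) → (Fin d → ℝ)} (hX : sm X) :
    sm (pullbackVF θ X) := by
  have : pullbackVF θ X = fun x => fderiv ℝ θinv (θ x) (X (θ x)) := by
    funext x; rw [pullbackVF, fderivDiffeo_inverse hθ hθinv hli hri]
  rw [this]
  exact ContDiff.clm_apply ((hθinv.fderiv_right (by exact_mod_cast le_refl _)).comp hθ) (hX.comp hθ)

lemma vfApply_pullback {X : (Fin d → ℝ) → (Fin d → ℝ)} {ψ : (Fin d → ℝ) → ℂ} (hψ : sm ψ) :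
    vfApply (pullbackVF θ X) (ψ ∘ θ) = (vfApply X ψ) ∘ θ := by
  funext x
  show fderiv ℝ (ψ ∘ θ) x ((fderiv ℝ θ x).inverse (X (θ x))) = fderiv ℝ ψ (θ x) (X (θ x))
  rw [fderiv_comp x (hψ.differentiable (by simp) (θ x))
    (hθ.differentiable (by simp) x),
    fderivDiffeo_inverse hθ hθinv hli hri]
  show fderiv ℝ ψ (θ x) (fderiv ℝ θ x (fderiv ℝ θinv (θ x) (X (θ x)))) = _
  congr 1
  exact (dEquiv hθ hθinv hli hri x).apply_symm_apply (X (θ x))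

lemma vfApply_pullback_iter {X : (Fin d → ℝ) → (Fin d → ℝ)} (hX : sm X)
    {φ : (Fin d → ℝ) → ℂ} (hφ : sm φ) (m : ℕ)
    (hiter : ∀ k, sm ((vfApply X)^[k] φ)) :
    (vfApply (pullbackVF θ X))^[m] (φ ∘ θ) = ((vfApply X)^[m] φ) ∘ θ := by
  induction m with
  | zero => rfl
  | succ m ih =>
    rw [Function.iterate_succ_apply', Function.iterate_succ_apply', ih]
    exact vfApply_pullback hθ hθinv hli hri (hiter m)

end Diffeo

lemma memDom_forward
    {θ θinv : (Fin d → ℝ) → (Fin d → ℝ)} (hθ : sm θ) (hθinv : sm θinv)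
    (hli : Function.LeftInverse θinv θ) (hri : Function.RightInverse θinv θ)
    {X : (Fin d → ℝ) → (Fin d → ℝ)} (hX : sm X)
    {a : ℕ → ℂ} {φ : (Fin d → ℝ) → ℂ} (hφ : sm φ) (hφc : HasCompactSupport φ)
    (h : memDom a X φ) : memDom a (pullbackVF θ X) (φ ∘ θ) := by
  intro α
  set ψ : ℕ → (Fin d → ℝ) → ℂ := fun m => (vfApply X)^[m] φ with hψdef
  have hψsm : ∀ m, sm (ψ m) := sm_vfApply_iter hX hφ
  have hψc : ∀ m, HasCompactSupport (ψ m) := fun m =>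
    hφc.of_isClosed_subset isClosed_closure (tsupport_vfApply_iter φ m)
  have hconj : ∀ m, (vfApply (pullbackVF θ X))^[m] (φ ∘ θ) = ψ m ∘ θ :=
    fun m => vfApply_pullback_iter hθ hθinv hli hri hX hφ m hψsm
  have h' : ∀ β : Fin d → ℕ, Summable (fun m => ‖a m‖ * ⨆ x, ‖mpd β (ψ m) x‖) := h
  set N := (canonList α).length with hN
  set Kθ : Set (Fin d → ℝ) := θ ⁻¹' (tsupport φ) with hKθ
  have hKθeq : Kθ = θinv '' (tsupport φ) := by
    ext x
    constructor
    · intro hx; exact ⟨θ x, hx, hli x⟩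
    · rintro ⟨y, hy, rfl⟩
      simp only [hKθ, Set.mem_preimage]
      rw [hri y]; exact hy
  have hKθc : IsCompact Kθ := hKθeq ▸ hφc.image hθinv.continuous
  -- bound on the derivatives of θ on Kθ
  have hgc : ContinuousOn (fun x => ∑ i ∈ Finset.range (N+1), ‖iteratedFDeriv ℝ i θ x‖) Kθ :=
    (continuous_finset_sum _ fun i _ => ((sm_iteratedFDeriv hθ i).continuous).norm).continuousOn
  obtain ⟨M, hM⟩ := hKθc.exists_bound_of_continuousOn hgc
  set D : ℝ := 1 + |M| with hD
  have hD1 : (1:ℝ) ≤ D := by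
    have := abs_nonneg M; simp only [hD]; linarith
  have hDbound : ∀ x ∈ Kθ, ∀ i, 1 ≤ i → i ≤ N → ‖iteratedFDeriv ℝ i θ x‖ ≤ D ^ i := by
    intro x hx i h1i hiN
    have hterm : ‖iteratedFDeriv ℝ i θ x‖
        ≤ ∑ j ∈ Finset.range (N+1), ‖iteratedFDeriv ℝ j θ x‖ :=
      Finset.single_le_sum (f := fun j => ‖iteratedFDeriv ℝ j θ x‖) (fun j _ => norm_nonneg _)
        (Finset.mem_range.mpr (Nat.lt_succ_of_le hiN))
    have h2 : ∑ j ∈ Finset.range (N+1), ‖iteratedFDeriv ℝ j θ x‖ ≤ M :=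
      (le_abs_self _).trans (by simpa [Real.norm_eq_abs] using hM x hx)
    have h3 : ‖iteratedFDeriv ℝ i θ x‖ ≤ D := by
      have := le_abs_self M; simp only [hD]; linarith
    exact h3.trans (le_self_pow₀ hD1 (by omega))
  -- the uniform bound on the derivatives of ψ m
  set C : ℕ → ℝ := fun m => ∑ i ∈ Finset.range (N+1),
      ∑ σ : Fin i → Fin d, supMpd (fun j => (List.ofFn σ).count j) (ψ m) with hC
  have hCnonneg : ∀ m, 0 ≤ C m := fun m =>
    Finset.sum_nonneg fun i _ => Finset.sum_nonneg fun σ _ => supMpd_nonneg _ _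
  have hCb : ∀ m, ∀ i ≤ N, ∀ y, ‖iteratedFDeriv ℝ i (ψ m) y‖ ≤ C m := by
    intro m i hi y
    refine (iteratedFDeriv_le_sum_supMpd (hψsm m) (hψc m) i y).trans ?_
    exact Finset.single_le_sum
      (f := fun i => ∑ σ : Fin i → Fin d, supMpd (fun j => (List.ofFn σ).count j) (ψ m))
      (fun j _ => Finset.sum_nonneg fun σ _ => supMpd_nonneg _ _)
      (Finset.mem_range.mpr (Nat.lt_succ_of_le hi))
  -- the pointwise sup bound
  have hsup : ∀ m, (⨆ x, ‖mpd α (ψ m ∘ θ) x‖) ≤ N.factorial * C m * D ^ N := by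
    intro m
    have hRHS : 0 ≤ (N.factorial : ℝ) * C m * D ^ N :=
      mul_nonneg (mul_nonneg (Nat.cast_nonneg _) (hCnonneg m)) (pow_nonneg (by linarith) _)
    refine Real.iSup_le (fun x => ?_) hRHS
    by_cases hx : x ∈ Kθ
    · have h1 : ‖mpd α (ψ m ∘ θ) x‖ ≤ ‖iteratedFDeriv ℝ N (ψ m ∘ θ) x‖ :=
        mpd_le_iteratedFDeriv ((hψsm m).comp hθ) x
      refine h1.trans ?_
      refine norm_iteratedFDeriv_comp_le (hψsm m) hθ ?_ x
        (fun i hi => hCb m i hi (θ x)) (fun i h1i hiN => hDbound x hx i h1i hiN)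
      · have : ((N:ℕ∞) : WithTop ℕ∞) ≤ ((⊤:ℕ∞) : WithTop ℕ∞) := WithTop.coe_le_coe.mpr le_top
        simpa using this
    · have hts : tsupport (ψ m ∘ θ) ⊆ Kθ := by
        refine closure_minimal ?_ (IsClosed.preimage hθ.continuous (isClosed_tsupport φ))
        intro z hz
        have : θ z ∈ Function.support (ψ m) := by
          simp only [Function.mem_support] at hz ⊢
          exact hz
        exact (subset_closure.trans (tsupport_vfApply_iter φ m)) this
      have hz : mpd α (ψ m ∘ θ) x = 0 :=
        image_eq_zero_of_notMem_tsupport fun hmem => hx (hts (tsupport_mpd α _ hmem))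
      rw [hz]
      simpa using hRHS
  -- summability of the majorant
  have hmaj : Summable (fun m => ((N.factorial : ℝ) * D ^ N) * (‖a m‖ * C m)) := by
    apply Summable.mul_left
    have heq : (fun m => ‖a m‖ * C m) = fun m => ∑ i ∈ Finset.range (N+1),
        ∑ σ : Fin i → Fin d, ‖a m‖ * supMpd (fun j => (List.ofFn σ).count j) (ψ m) := by
      funext m
      rw [hC, Finset.mul_sum]
      exact Finset.sum_congr rfl fun i _ => Finset.mul_sum _ _ _
    rw [heq]
    exact summable_sum fun i _ => summable_sum fun σ _ => h' fun j => (List.ofFn σ).count j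
  -- conclusion
  have hgoal : (fun m => ‖a m‖ * ⨆ x, ‖mpd α ((vfApply (pullbackVF θ X))^[m] (φ ∘ θ)) x‖)
      = fun m => ‖a m‖ * ⨆ x, ‖mpd α (ψ m ∘ θ) x‖ := by
    funext m; rw [hconj m]
  rw [hgoal]
  refine Summable.of_nonneg_of_le
    (fun m => mul_nonneg (norm_nonneg _) (Real.iSup_nonneg fun x => norm_nonneg _))
    (fun m => ?_) hmaj
  calc ‖a m‖ * ⨆ x, ‖mpd α (ψ m ∘ θ) x‖
      ≤ ‖a m‖ * ((N.factorial : ℝ) * C m * D ^ N) :=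
        mul_le_mul_of_nonneg_left (hsup m) (norm_nonneg _)
    _ = ((N.factorial : ℝ) * D ^ N) * (‖a m‖ * C m) := by ring

lemma preimage_eq_image {θ θinv : (Fin d → ℝ) → (Fin d → ℝ)}
    (hli : Function.LeftInverse θinv θ) (hri : Function.RightInverse θinv θ)
    (S : Set (Fin d → ℝ)) : θ ⁻¹' S = θinv '' S := by
  ext x
  constructor
  · intro hx; exact ⟨θ x, hx, hli x⟩
  · rintro ⟨y, hy, rfl⟩
    simp only [Set.mem_preimage]
    rw [hri y]; exact hy

end Stmt19Aux

open Stmt19Aux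

/-- `P(X)` is coordinate-independent: for a diffeomorphism `θ`,
`φ ∈ dom(P(X))` iff `φ ∘ θ ∈ dom(P(θ^*X))`, and then `P(θ^*X)(φ∘θ) = (P(X)φ) ∘ θ`. -/
theorem stmt19 (d : ℕ) (θ θinv : (Fin d → ℝ) → (Fin d → ℝ))
    (hθ : ContDiff ℝ (⊤ : ℕ∞) θ) (hθinv : ContDiff ℝ (⊤ : ℕ∞) θinv)
    (hli : Function.LeftInverse θinv θ) (hri : Function.RightInverse θinv θ)
    (X : (Fin d → ℝ) → (Fin d → ℝ)) (hX : ContDiff ℝ (⊤ : ℕ∞) X)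
    (a : ℕ → ℂ) (φ : (Fin d → ℝ) → ℂ)
    (hφ : ContDiff ℝ (⊤ : ℕ∞) φ) (hφc : HasCompactSupport φ) :
    (memDom a X φ ↔ memDom a (pullbackVF θ X) (φ ∘ θ)) ∧
    (memDom a X φ →
      (fun x => ∑' m : ℕ, a m * (vfApply (pullbackVF θ X))^[m] (φ ∘ θ) x) =
        fun x => ∑' m : ℕ, a m * (vfApply X)^[m] φ (θ x)) := by
  have hconj : ∀ m, (vfApply (pullbackVF θ X))^[m] (φ ∘ θ) = ((vfApply X)^[m] φ) ∘ θ :=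
    fun m => vfApply_pullback_iter hθ hθinv hli hri hX hφ m (sm_vfApply_iter hX hφ)
  constructor
  · constructor
    · exact fun h => memDom_forward hθ hθinv hli hri hX hφ hφc h
    · intro h
      have hX' : sm (pullbackVF θ X) := sm_pullbackVF hθ hθinv hli hri hX
      have hφθ : sm (φ ∘ θ) := hφ.comp hθ
      have hφθc : HasCompactSupport (φ ∘ θ) := by
        have hsub : tsupport (φ ∘ θ) ⊆ θ ⁻¹' tsupport φ := by
          refine closure_minimal ?_ (IsClosed.preimage hθ.continuous (isClosed_tsupport φ))
          intro z hz
          exact subset_closure hz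
        rw [preimage_eq_image hli hri] at hsub
        exact (hφc.image hθinv.continuous).of_isClosed_subset isClosed_closure hsub
      have h2 := memDom_forward hθinv hθ hri hli hX' hφθ hφθc h
      have e1 : pullbackVF θinv (pullbackVF θ X) = X := by
        funext y
        show (fderiv ℝ θinv y).inverse ((pullbackVF θ X) (θinv y)) = X y
        rw [fderivDiffeo_inverse hθinv hθ hri hli y]
        show fderiv ℝ θ (θinv y) ((fderiv ℝ θ (θinv y)).inverse (X (θ (θinv y)))) = X y
        rw [fderivDiffeo_inverse hθ hθinv hli hri (θinv y), hri y]
        exact (dEquiv hθinv hθ hri hli y).symm_apply_apply (X y)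
      have e2 : (φ ∘ θ) ∘ θinv = φ := by
        funext y
        simp only [Function.comp_apply]
        rw [hri y]
      rw [e1, e2] at h2
      exact h2
  · intro _
    funext x
    exact tsum_congr fun m => congrArg (fun z => a m * z) (congrFun (hconj m) x)
end
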